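/- arXiv:math/0108136 — 8 statements merged into one kernel-verified Lean document; each statement's English description precedes it below -/
import Mathlib

section
/- In the free associative ℂ-algebra generated by x^1,...,x^N modulo the relations x^a x^b = q(a,b) x^b x^a (with q as in the twisted constraints, in particular q(a,a')=1 and g_{ab}=δ_{a,b'}), the element c = Σ_a x^a x^{a'} is central. -/
/-- The defining relations of the twisted quantum Euclidean plane:
`x^a x^b = q(a,b) x^b x^a`. -/
def twistRel {N : ℕ} (q : Fin N × Fin N → ℂˣ) :
    FreeAlgebra ℂ (Fin N) → FreeAlgebra ℂ (Fin N) → Prop :=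
  fun u v => ∃ a b : Fin N,
    u = FreeAlgebra.ι ℂ a * FreeAlgebra.ι ℂ b ∧
    v = (q (a, b) : ℂ) • (FreeAlgebra.ι ℂ b * FreeAlgebra.ι ℂ a)

/-- The twisted quantum Euclidean plane `ℝ_q^N`: the quotient of the free
associative ℂ-algebra on generators `x^1,...,x^N` by the relations
`x^a x^b = q(a,b) x^b x^a`. -/
abbrev TwistedPlane {N : ℕ} (q : Fin N × Fin N → ℂˣ) := RingQuot (twistRel q)

/-- The coordinate generators of the twisted plane. -/
def X {N : ℕ} (q : Fin N × Fin N → ℂˣ) (a : Fin N) : TwistedPlane q :=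
  RingQuot.mkAlgHom ℂ (twistRel q) (FreeAlgebra.ι ℂ a)

lemma X_swap {N : ℕ} (q : Fin N × Fin N → ℂˣ) (a b : Fin N) :
    X q a * X q b = (q (a, b) : ℂ) • (X q b * X q a) := by
  have hr : twistRel q (FreeAlgebra.ι ℂ a * FreeAlgebra.ι ℂ b)
      ((q (a, b) : ℂ) • (FreeAlgebra.ι ℂ b * FreeAlgebra.ι ℂ a)) := ⟨a, b, rfl, rfl⟩
  have h := RingQuot.mkAlgHom_rel ℂ hr
  simpa [X, map_mul, map_smul] using h

/-- with `q` satisfying the twisted constraints (primed index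
`a' = Fin.rev a`, metric `g_{ab} = δ_{a,b'}`), the element
`c = Σ_a x^a x^{a'}` is central in `ℝ_q^N`. -/
theorem c_central {N : ℕ} (q : Fin N × Fin N → ℂˣ)
    (h1 : ∀ a, q (a, a) = 1)
    (h2 : ∀ a b, q (b, a) = (q (a, b))⁻¹)
    (h3 : ∀ a b, q (a, Fin.rev b) = (q (a, b))⁻¹)
    (h4 : ∀ a b, q (a, b) = q (Fin.rev a, Fin.rev b)) :
    ∀ f : TwistedPlane q,
      (∑ a, X q a * X q (Fin.rev a)) * f = f * (∑ a, X q a * X q (Fin.rev a)) := by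
  set c : TwistedPlane q := ∑ a, X q a * X q (Fin.rev a) with hc
  -- q(rev a, b) * q(a, b) = 1
  have hqmul : ∀ a b : Fin N, (q (Fin.rev a, b) : ℂ) * (q (a, b) : ℂ) = 1 := by
    intro a b
    have : q (Fin.rev a, b) = (q (a, b))⁻¹ := by
      have := h3 (Fin.rev a) (Fin.rev b)
      rw [Fin.rev_rev] at this
      rw [← h4 a b] at this
      exact this
    rw [this]
    rw [← Units.val_mul, inv_mul_cancel, Units.val_one]
  -- c commutes with each generator
  have hgen : ∀ b : Fin N, c * X q b = X q b * c := by
    intro b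
    rw [hc, Finset.sum_mul, Finset.mul_sum]
    refine Finset.sum_congr rfl fun a _ => ?_
    calc X q a * X q (Fin.rev a) * X q b
        = X q a * ((q (Fin.rev a, b) : ℂ) • (X q b * X q (Fin.rev a))) := by
          rw [mul_assoc, X_swap q (Fin.rev a) b]
      _ = (q (Fin.rev a, b) : ℂ) • (X q a * X q b * X q (Fin.rev a)) := by
          rw [mul_smul_comm, mul_assoc]
      _ = (q (Fin.rev a, b) : ℂ) • (((q (a, b) : ℂ) • (X q b * X q a)) * X q (Fin.rev a)) := by
          rw [X_swap q a b]
      _ = ((q (Fin.rev a, b) : ℂ) * (q (a, b) : ℂ)) •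
            (X q b * (X q a * X q (Fin.rev a))) := by
          rw [smul_mul_assoc, smul_smul, mul_assoc]
      _ = X q b * (X q a * X q (Fin.rev a)) := by rw [hqmul, one_smul]
  -- general element
  intro f
  obtain ⟨y, rfl⟩ := RingQuot.mkAlgHom_surjective ℂ (twistRel q) f
  induction y using FreeAlgebra.induction with
  | grade0 r =>
      rw [AlgHom.commutes]
      exact (Algebra.commutes r c).symm
  | grade1 i => exact hgen i
  | mul u v hu hv =>
      rw [map_mul, ← mul_assoc, hu, mul_assoc, hv, mul_assoc]
  | add u v hu hv =>
      rw [map_add, mul_add, add_mul, hu, hv]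
end

section
/- With g_{ab}=δ_{a,b'} and det g = (−1)^{⌊N/2⌋}, the q-epsilon tensor satisfies the q-determinant identity: Σ_{i_1,...,i_N} ε_q^{i_1...i_N} g_{1 i_1} ⋯ g_{N i_N} = (−1)^{⌊N/2⌋}. Equivalently, ε_q^{N, N−1, ..., 1} = (−1)^{⌊N/2⌋} ε_q^{1,2,...,N}. -/
/-- The q-epsilon tensor on `N` letters: `ε_q^{1...N} = 1`, it vanishes on
tuples with a repeated index, and swapping two adjacent entries `...ab...`
produces a factor `−q(a,b)` (so `ε_q^{...ab...} = −q(a,b) ε_q^{...ba...}`).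
Explicitly, on an injective tuple it is the product over all inversions of
the corresponding factors `−q`. -/
def epsQ {N : ℕ} (q : Fin N → Fin N → ℂ) (i : Fin N → Fin N) : ℂ :=
  if Function.Injective i then
    ∏ p ∈ Finset.univ.filter (fun p : Fin N × Fin N => p.1 < p.2 ∧ i p.2 < i p.1),
      (-(q (i p.1) (i p.2)))
  else 0

/-!
Every pair `a < b` is an inversion of the reversal `k ↦ k'`, so `ε_q^{N...1}` is the product of
`−q(a', b') = −q(a, b)` over all `N choose 2` such pairs. The involution `(a, b) ↦ (b', a')` of
these pairs matches `q(a, b)` with `q(b', a') = q(b, a) = q(a, b)⁻¹`, and its fixed points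
`(a, a')` contribute `q(a, a') = q(a, a)⁻¹ = 1`; hence only the sign `(−1)^(N choose 2)`
survives, and `N choose 2 ≡ ⌊N/2⌋ mod 2`.
-/

open Finset

lemma Nat.choose_two_mod_two (n : ℕ) : n.choose 2 % 2 = n / 2 % 2 := by
  induction n with
  | zero => rfl
  | succ n ih => rw [Nat.choose_succ_succ', Nat.choose_one_right, Nat.add_mod, ih]; omega

lemma neg_one_pow_choose_two {R : Type*} [Ring R] (n : ℕ) :
    (-1 : R) ^ n.choose 2 = (-1) ^ (n / 2) := by
  rw [neg_one_pow_eq_pow_mod_two, Nat.choose_two_mod_two, ← neg_one_pow_eq_pow_mod_two]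

lemma Fin.card_filter_fst_lt_snd (N : ℕ) : #{p : Fin N × Fin N | p.1 < p.2} = N.choose 2 := by
  simpa [univ_product_univ] using card_product_filter_lt (s := (univ : Finset (Fin N)))

lemma Fin.prod_filter_fst_lt_snd_eq_one {M : Type*} [CommMonoid M] {N : ℕ}
    (f : Fin N → Fin N → M) (hpair : ∀ a b, f a b * f b.rev a.rev = 1)
    (hdiag : ∀ a, f a a.rev = 1) :
    ∏ p : Fin N × Fin N with p.1 < p.2, f p.1 p.2 = 1 := by
  refine prod_involution (fun p _ => (p.2.rev, p.1.rev)) (fun p _ => hpair p.1 p.2) ?_ ?_ ?_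
  · rintro ⟨a, b⟩ - hne heq
    obtain rfl : b.rev = a := congrArg Prod.fst heq
    exact absurd (hdiag b.rev) (by simpa using hne)
  · intro p hp
    simpa using hp
  · intro p _
    simp

lemma sum_mul_prod_ite_eq {α β R : Type*} [Fintype α] [DecidableEq α] [Fintype β]
    [DecidableEq β] [CommSemiring R] (f : (α → β) → R) (σ : α → β) :
    ∑ i : α → β, f i * ∏ k, (if i k = σ k then (1 : R) else 0) = f σ := by
  simp_rw [Fintype.prod_boole, ← funext_iff, mul_boole, Fintype.sum_ite_eq']

section epsQ

variable {N : ℕ} (q : Fin N → Fin N → ℂ)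

lemma epsQ_id : epsQ q id = 1 := by
  rw [epsQ, if_pos Function.injective_id, filter_false_of_mem fun p _ h => lt_asymm h.1 h.2,
    prod_empty]

lemma epsQ_rev (hrev : ∀ a b, q a b = q a.rev b.rev) :
    epsQ q Fin.rev = (-1) ^ N.choose 2 * ∏ p : Fin N × Fin N with p.1 < p.2, q p.1 p.2 := by
  have hinv : ∀ p : Fin N × Fin N, p.2.rev < p.1.rev ↔ p.1 < p.2 := fun _ => Fin.rev_lt_rev
  rw [epsQ, if_pos Fin.rev_injective]
  simp_rw [hinv, and_self, ← hrev]
  rw [← Fin.card_filter_fst_lt_snd, ← prod_const, ← prod_mul_distrib]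
  simp only [neg_one_mul]

lemma epsQ_rev_eq_neg_one_pow (h1 : ∀ a, q a a = 1) (h2 : ∀ a b, q a b * q b a = 1)
    (h3 : ∀ a b, q a b * q a (Fin.rev b) = 1) (h4 : ∀ a b, q a b = q (Fin.rev a) (Fin.rev b)) :
    epsQ q Fin.rev = (-1) ^ (N / 2) := by
  have hprod : ∏ p : Fin N × Fin N with p.1 < p.2, q p.1 p.2 = 1 :=
    Fin.prod_filter_fst_lt_snd_eq_one q (fun a b => by rw [← h4, h2])
      (fun a => by simpa [h1] using h3 a a)
  rw [epsQ_rev q h4, hprod, mul_one, neg_one_pow_choose_two]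

end epsQ

/-- with `g_{ab} = δ_{a,b'}` (primed index `b' = Fin.rev b`) and
`det g = (−1)^⌊N/2⌋`, the q-determinant identity
`Σ ε_q^{i_1...i_N} g_{1 i_1} ⋯ g_{N i_N} = (−1)^⌊N/2⌋`; equivalently
`ε_q^{N,N−1,...,1} = (−1)^⌊N/2⌋ ε_q^{1,2,...,N}`. -/
theorem epsQ_det {N : ℕ} (q : Fin N → Fin N → ℂ)
    (h1 : ∀ a, q a a = 1)
    (h2 : ∀ a b, q a b * q b a = 1)
    (h3 : ∀ a b, q a b * q a (Fin.rev b) = 1)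
    (h4 : ∀ a b, q a b = q (Fin.rev a) (Fin.rev b)) :
    (∑ i : Fin N → Fin N,
        epsQ q i * ∏ k, (if i k = Fin.rev k then (1 : ℂ) else 0))
      = (-1 : ℂ) ^ (N / 2) ∧
    epsQ q (fun k => Fin.rev k) = (-1 : ℂ) ^ (N / 2) * epsQ q (fun k => k) := by
  have hrev := epsQ_rev_eq_neg_one_pow q h1 h2 h3 h4
  refine ⟨by rw [sum_mul_prod_ite_eq, hrev], ?_⟩
  show epsQ q Fin.rev = _ * epsQ q id
  rw [hrev, epsQ_id, mul_one]
end

section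
/- Reversal identity for the q-epsilon tensor: ε_{q^{-1}}^{j_1...j_N} = (−1)^{⌊N/2⌋} ε_q^{j_N ... j_1}, where ε_{q^{-1}} is the epsilon tensor built from the inverse parameters q(a,b)^{-1}. -/
/-! For injective `j`, the relation `q(a,b)⁻¹ = q(b,a)` turns `ε_{q⁻¹}(j)` into the product of
`-q(x,y)` over the value pairs `x < y` inverted by `j`, while reindexing `ε_q(j ∘ rev)` by
`(a,b) ↦ (rev b, rev a)` shows it is the inverse of the product over the pairs `j` keeps in order.
So their quotient is `∏_{x<y} (-q(x,y))`, in which the factors of `(x,y)` and `(rev y, rev x)`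
cancel and each of the `⌊N/2⌋` pairs `(x, rev x)` contributes `-1`. -/

open Finset Function

theorem prod_lt_pairs_comp_injective {α M : Type*} [LinearOrder α] [Fintype α] [CommMonoid M]
    (f : α → α → M) {j : α → α} (hj : Injective j) :
    (∏ p : α × α with p.1 < p.2 ∧ j p.2 < j p.1, f (j p.2) (j p.1)) *
        ∏ p : α × α with p.1 < p.2 ∧ j p.1 < j p.2, f (j p.1) (j p.2) =
      ∏ p : α × α with p.1 < p.2, f p.1 p.2 := by
  have hswap : ∏ p : α × α with p.1 < p.2 ∧ j p.2 < j p.1, f (j p.2) (j p.1) =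
      ∏ p : α × α with p.2 < p.1 ∧ j p.1 < j p.2, f (j p.1) (j p.2) :=
    prod_equiv (Equiv.prodComm α α) (by simp) (by simp)
  have hunion : (univ.filter fun p : α × α => p.2 < p.1 ∧ j p.1 < j p.2) ∪
      univ.filter (fun p : α × α => p.1 < p.2 ∧ j p.1 < j p.2) =
      univ.filter fun p : α × α => j p.1 < j p.2 := by
    ext ⟨a, b⟩
    simp only [mem_union, mem_filter, mem_univ, true_and, ← or_and_right, and_iff_right_iff_imp]
    exact fun h => (ne_of_apply_ne j h.ne).symm.lt_or_gt
  rw [hswap, ← prod_union (disjoint_filter.2 fun p _ h h' => lt_asymm h.1 h'.1), hunion]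
  exact prod_bijective (Prod.map j j) (hj.bijective_of_finite.prodMap hj.bijective_of_finite)
    (by simp) (by simp)

theorem prod_lt_pairs_comp_rev {α M : Type*} [LinearOrder α] [CommMonoid M] {N : ℕ}
    (f : α → α → M) (j : Fin N → α) :
    ∏ p : Fin N × Fin N with p.1 < p.2 ∧ j p.2.rev < j p.1.rev, f (j p.1.rev) (j p.2.rev) =
      ∏ p : Fin N × Fin N with p.1 < p.2 ∧ j p.1 < j p.2, f (j p.2) (j p.1) :=
  prod_equiv ((Fin.revPerm.prodCongr Fin.revPerm).trans (Equiv.prodComm _ _))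
    (by simp [and_comm]) (by simp)

theorem card_lt_pairs_rev (N : ℕ) :
    #{p : Fin N × Fin N | p.1 < p.2 ∧ p.2 = p.1.rev} = N / 2 := by
  rw [← min_eq_right (Nat.div_le_self N 2), ← Fin.card_filter_val_lt]
  refine card_nbij' Prod.fst (fun a => (a, a.rev)) ?_ ?_ ?_ ?_
  · rintro ⟨a, b⟩
    simp only [coe_filter, mem_univ, true_and, Set.mem_ofPred_eq, Fin.lt_def]
    rintro ⟨hab, rfl⟩
    simp only [Fin.val_rev] at hab ⊢
    omega
  · intro a
    simp only [coe_filter, mem_univ, true_and, Set.mem_ofPred_eq, Fin.lt_def, Fin.val_rev,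
      and_true]
    omega
  · rintro ⟨a, b⟩ h
    simp_all
  · intro a _
    rfl

theorem prod_neg_lt_pairs_eq_neg_one_pow {R : Type*} [CommRing R] {N : ℕ}
    (q : Fin N → Fin N → R) (hrev : ∀ a, q a a.rev = 1)
    (hpair : ∀ a b, q a b * q b.rev a.rev = 1) :
    ∏ p : Fin N × Fin N with p.1 < p.2, -q p.1 p.2 = (-1) ^ (N / 2) := by
  rw [← prod_filter_mul_prod_filter_not _ (fun p => p.2 = p.1.rev)]
  have hdiag : ∏ p ∈ ({p : Fin N × Fin N | p.1 < p.2} : Finset _) with p.2 = p.1.rev,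
      -q p.1 p.2 = (-1) ^ (N / 2) := by
    rw [prod_congr rfl (g := fun _ => -1), prod_const, filter_filter, card_lt_pairs_rev]
    rintro ⟨a, b⟩ h
    simp_all
  have hoff : ∏ p ∈ ({p : Fin N × Fin N | p.1 < p.2} : Finset _) with ¬p.2 = p.1.rev,
      -q p.1 p.2 = 1 := by
    refine prod_involution (fun p _ => (p.2.rev, p.1.rev)) ?_ ?_ ?_ ?_
    · rintro ⟨a, b⟩ -
      simpa using hpair a b
    · rintro ⟨a, b⟩ h - heq
      simp_all
    · rintro ⟨a, b⟩ h
      simp_all [eq_comm]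
    · simp
  rw [hdiag, hoff, mul_one]

/-- reversal identity for the q-epsilon tensor:
`ε_{q^{-1}}^{j_1...j_N} = (−1)^⌊N/2⌋ ε_q^{j_N...j_1}`, where `ε_{q^{-1}}` is
built from the inverse parameters `q(a,b)⁻¹`. -/
theorem epsQ_reversal {N : ℕ} (q : Fin N → Fin N → ℂ)
    (h1 : ∀ a, q a a = 1)
    (h2 : ∀ a b, q a b * q b a = 1)
    (h3 : ∀ a b, q a b * q a (Fin.rev b) = 1)
    (h4 : ∀ a b, q a b = q (Fin.rev a) (Fin.rev b)) :
    ∀ j : Fin N → Fin N,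
      epsQ (fun a b => (q a b)⁻¹) j = (-1 : ℂ) ^ (N / 2) * epsQ q (j ∘ Fin.rev) := by
  intro j
  by_cases hj : Injective j
  · have hinv (a b : Fin N) : (q a b)⁻¹ = q b a := inv_eq_of_mul_eq_one_right (h2 a b)
    have hL : epsQ (fun a b => (q a b)⁻¹) j =
        ∏ p : Fin N × Fin N with p.1 < p.2 ∧ j p.2 < j p.1, -q (j p.2) (j p.1) := by
      simp only [epsQ, if_pos hj, hinv]
    have hR : epsQ q (j ∘ Fin.rev) =
        ∏ p : Fin N × Fin N with p.1 < p.2 ∧ j p.1 < j p.2, -q (j p.2) (j p.1) := by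
      rw [epsQ, if_pos (hj.comp Fin.rev_injective)]
      exact prod_lt_pairs_comp_rev (fun a b => -q a b) j
    have hcancel : (∏ p : Fin N × Fin N with p.1 < p.2 ∧ j p.1 < j p.2, -q (j p.1) (j p.2)) *
        ∏ p : Fin N × Fin N with p.1 < p.2 ∧ j p.1 < j p.2, -q (j p.2) (j p.1) = 1 := by
      rw [← prod_mul_distrib]
      exact prod_eq_one fun p _ => by rw [neg_mul_neg, h2]
    have hsplit := prod_lt_pairs_comp_injective (fun a b => -q a b) hj
    rw [prod_neg_lt_pairs_eq_neg_one_pow q (fun a => by simpa [h1] using h3 a a)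
      (fun a b => h4 b a ▸ h2 a b)] at hsplit
    rw [hL, hR, ← hsplit, mul_assoc, hcancel, mul_one]
  · have hjr : ¬Injective (j ∘ Fin.rev) := fun h => hj <| by
      simpa [comp_assoc] using h.comp Fin.rev_injective
    rw [epsQ, epsQ, if_neg hj, if_neg hjr, mul_zero]
end

section
/- Let W_{1...k} be the q-antisymmetrizer on (ℂ^N)^{⊗k} built from Λ^{ab}_{cd}=q(a,b)δ^a_d δ^b_c via the recursion W_{1...k} = 𝓘_{1...k} W_{1...k−1}, 𝓘_{1...k} = I − 𝓘_{1...k−1}Λ_{k−1,k} (with W on one factor = I, 𝓘 on one factor = I). Then W satisfies the idempotency-type relation W_{1...k} W_{1...k} = k! · W_{1...k}. -/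
/-- `Λ` acting at positions `t, t+1` of `(ℂ^N)^{⊗k}` (identity if `t+1 ≥ k`):
built from `Λ^{ab}_{cd} = q(a,b) δ^a_d δ^b_c`, it maps `e_g` to
`q(g t, g (t+1)) e_{g ∘ swap(t,t+1)}`. -/
def lamPos {N : ℕ} (q : Fin N → Fin N → ℂ) (k t : ℕ) :
    Matrix (Fin k → Fin N) (Fin k → Fin N) ℂ :=
  if h : t + 1 < k then
    fun f g =>
      if g = f ∘ (Equiv.swap (⟨t, Nat.lt_of_succ_lt h⟩ : Fin k) ⟨t + 1, h⟩)
      then q (f ⟨t, Nat.lt_of_succ_lt h⟩) (f ⟨t + 1, h⟩) else 0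
  else 1

/-- The operators `𝓘_{1...m}` of the q-antisymmetrizer recursion:
`𝓘_{1} = I`, `𝓘_{1...m} = I − 𝓘_{1...m−1} Λ_{m−1,m}`
(in 0-based positions `Λ_{m−1,m} = lamPos q k (m−2)`), realized as matrices on
`(ℂ^N)^{⊗k}`. -/
noncomputable def Ical {N : ℕ} (q : Fin N → Fin N → ℂ) (k : ℕ) :
    ℕ → Matrix (Fin k → Fin N) (Fin k → Fin N) ℂ
  | 0 => 1
  | 1 => 1
  | (m + 2) => 1 - Ical q k (m + 1) * lamPos q k m

/-- The q-antisymmetrizer `W_{1...m}` defined by the recursion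
`W_{1...m} = 𝓘_{1...m} W_{1...m−1}`, `W_1 = I`. -/
noncomputable def Wmat {N : ℕ} (q : Fin N → Fin N → ℂ) (k : ℕ) :
    ℕ → Matrix (Fin k → Fin N) (Fin k → Fin N) ℂ
  | 0 => 1
  | (m + 1) => Ical q k (m + 1) * Wmat q k m

/-! The matrices `qPermRep hq σ : e_f ↦ (∏ over inversions of σ of q) • e_{f ∘ σ}` form a
representation of `S_k` in which the adjacent transposition `(t t+1)` acts as `Λ_{t,t+1}`;
`q a b * q b a = 1` is exactly what makes the product of `q` over inversions a cocycle.
Unwinding the recursion, `𝓘_{1…m+1} = ∑_{j ≤ m} sign(c_j) c_j` for the cycles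
`c_j = (j j+1 … m)`, which are coset representatives of `S_m` in `S_{m+1}`; hence
`W_{1…k} = ∑_σ sign σ · σ`. Left multiplication by `σ` permutes the terms of such a signed sum
up to the factor `sign σ`, so its square is `k!` times itself. -/

open Equiv Equiv.Perm Finset

section InversionProd

variable {α R : Type*} [CommMonoid R] (q : α → α → R) {k : ℕ}

def inversionProd (f : Fin k → α) (σ : Perm (Fin k)) : R :=
  ∏ x ∈ finPairsLT k, if σ x.1 < σ x.2 then q (f (σ x.1)) (f (σ x.2)) else 1

@[simp]
theorem inversionProd_one (f : Fin k → α) : inversionProd q f 1 = 1 :=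
  prod_eq_one fun _ hx => if_neg (mem_finPairsLT.1 hx).not_gt

theorem inversionProd_swap_succ (f : Fin k → α) (i : Fin k) (h : (i : ℕ) + 1 < k) :
    inversionProd q f (swap i ⟨i + 1, h⟩) = q (f i) (f ⟨i + 1, h⟩) := by
  have hi : (⟨⟨i + 1, h⟩, i⟩ : Σ _ : Fin k, Fin k) ∈ finPairsLT k :=
    mem_finPairsLT.2 (Fin.lt_def.2 (by simp))
  rw [inversionProd, prod_eq_single_of_mem _ hi]
  · simp [Fin.lt_def]
  rintro ⟨a, b⟩ hab hne
  rw [mem_finPairsLT] at hab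
  refine if_neg ?_
  have hne' : ¬((a : ℕ) = i + 1 ∧ (b : ℕ) = i) := fun ⟨h1, h2⟩ => hne (by
    obtain rfl := Fin.ext h2; obtain rfl : a = ⟨b + 1, h⟩ := Fin.ext h1; rfl)
  simp only [swap_apply_def]
  split_ifs <;> simp only [Fin.lt_def, Fin.ext_iff] at * <;> omega

variable {q}

theorem inversionProd_mul (hq : ∀ a b, q a b * q b a = 1) (f : Fin k → α)
    (σ τ : Perm (Fin k)) :
    inversionProd q f (σ * τ) = inversionProd q f σ * inversionProd q (f ∘ σ) τ := by
  have reindex : inversionProd q f σ = ∏ x ∈ finPairsLT k, let y := signBijAux τ x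
      if σ y.1 < σ y.2 then q (f (σ y.1)) (f (σ y.2)) else 1 :=
    (prod_nbij (signBijAux τ) signBijAux_mem signBijAux_injOn signBijAux_surj
      fun _ _ => rfl).symm
  rw [reindex, inversionProd, inversionProd, ← prod_mul_distrib]
  refine prod_congr rfl fun ⟨a, b⟩ hab => ?_
  have hτ_ne : τ a ≠ τ b := τ.injective.ne (mem_finPairsLT.1 hab).ne'
  dsimp only [signBijAux, Function.comp_apply]
  rcases hτ_ne.lt_or_gt with hτ | hτ
  · rcases (σ.injective.ne hτ_ne).lt_or_gt with hσ | hσ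
    · simp [hτ, hτ.not_gt, hσ, hσ.not_gt]
    · simp [hτ, hτ.not_gt, hσ, hσ.not_gt, hq]
  · simp only [dif_pos hτ, if_neg hτ.not_gt, mul_one, mul_apply]

end InversionProd

variable {α R : Type*} [Fintype α] [DecidableEq α] [CommSemiring R] {q : α → α → R} {k : ℕ} in
def qPermRep (hq : ∀ a b, q a b * q b a = 1) :
    Perm (Fin k) →* Matrix (Fin k → α) (Fin k → α) R where
  toFun σ := Matrix.of fun f g => if g = f ∘ σ then inversionProd q f σ else 0
  map_one' := by
    ext f g
    simp [Matrix.one_apply, eq_comm]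
  map_mul' σ τ := by
    ext f g
    simp only [Matrix.mul_apply, Matrix.of_apply, ite_mul, zero_mul, sum_ite_eq', mem_univ,
      if_true]
    simp [inversionProd_mul hq, Function.comp_assoc, mul_ite]

theorem sum_smul_mul_self {G A : Type*} [Group G] [Fintype G] [Ring A] (χ : G →* ℤˣ)
    (ρ : G →* A) :
    (∑ g, χ g • ρ g) * ∑ g, χ g • ρ g = Fintype.card G • ∑ g, χ g • ρ g := by
  have absorb : ∀ g, χ g • ρ g * ∑ h, χ h • ρ h = ∑ h, χ h • ρ h := fun g => by
    rw [mul_sum]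
    exact Fintype.sum_equiv (Equiv.mulLeft g) _ _ fun h => by
      simp [smul_mul_smul_comm, map_mul]
  rw [sum_mul, sum_congr rfl fun g _ => absorb g, sum_const, card_univ]

theorem Fin.cycleIcc_succ_eq_swap {k : ℕ} (m : Fin k) (h : (m : ℕ) + 1 < k) :
    Fin.cycleIcc m ⟨m + 1, h⟩ = swap m ⟨m + 1, h⟩ := by
  have : NeZero k := NeZero.of_pos m.pos
  ext x
  rcases lt_or_ge x m with hx | hx
  · rw [Fin.cycleIcc_of_lt hx, swap_apply_of_ne_of_ne hx.ne (by simp [Fin.ext_iff]; omega)]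
  rcases lt_or_ge (⟨m + 1, h⟩ : Fin k) x with hx' | hx'
  · rw [Fin.cycleIcc_of_gt hx', swap_apply_of_ne_of_ne
      ((Fin.lt_def.2 (Nat.lt_succ_self m)).trans hx').ne' hx'.ne']
  rw [Fin.cycleIcc_of_le_of_le hx hx']
  rcases Fin.eq_or_lt_of_le hx with rfl | hx
  · simp [Fin.ext_iff, Fin.val_add_one_of_lt' h]
  · obtain rfl : x = ⟨m + 1, h⟩ := Fin.ext (by simp only [Fin.lt_def, Fin.le_def] at *; omega)
    simp

theorem Fin.cycleIcc_mul_swap {k : ℕ} {j m : Fin k} (hjm : j ≤ m) (h : (m : ℕ) + 1 < k) :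
    Fin.cycleIcc j m * swap m ⟨m + 1, h⟩ = Fin.cycleIcc j ⟨m + 1, h⟩ := by
  have : NeZero k := NeZero.of_pos m.pos
  rw [← Fin.cycleIcc_succ_eq_swap m h]
  exact DFunLike.coe_injective (Fin.cycleIcc.trans hjm (Fin.le_def.2 (by simp)))

def permsSupportedBelow (k m : ℕ) : Finset (Perm (Fin k)) :=
  {σ | ∀ i : Fin k, m ≤ (i : ℕ) → σ i = i}

theorem mem_permsSupportedBelow {k m : ℕ} {σ : Perm (Fin k)} :
    σ ∈ permsSupportedBelow k m ↔ ∀ i : Fin k, m ≤ (i : ℕ) → σ i = i := by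
  simp [permsSupportedBelow]

theorem sum_permsSupportedBelow_succ {k : ℕ} {M : Type*} [AddCommMonoid M]
    (F : Perm (Fin k) → M) (m : Fin k) :
    ∑ π ∈ permsSupportedBelow k (m + 1), F π =
      ∑ j ∈ Iic m, ∑ σ ∈ permsSupportedBelow k m, F (Fin.cycleIcc j m * σ) := by
  have : NeZero k := NeZero.of_pos m.pos
  rw [← sum_product']
  symm
  refine sum_nbij' (fun p => Fin.cycleIcc p.1 m * p.2)
    (fun π => (π m, (Fin.cycleIcc (π m) m)⁻¹ * π)) ?_ ?_ ?_ ?_ fun _ _ => rfl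
  · rintro ⟨j, σ⟩ hp
    simp only [mem_product, mem_Iic, mem_permsSupportedBelow] at hp ⊢
    intro i hi
    rw [mul_apply, hp.2 i (by omega), Fin.cycleIcc_of_gt (Fin.lt_def.2 (by omega))]
  · intro π hπ
    rw [mem_permsSupportedBelow] at hπ
    have hπm : π m ≤ m := by
      by_contra! hlt
      exact hlt.ne' (π.injective (hπ _ (Fin.lt_def.1 hlt)))
    simp only [mem_product, mem_Iic, mem_permsSupportedBelow, hπm, Perm.inv_eq_iff_eq, mul_apply,
      true_and]
    intro i hi
    rcases (Fin.le_def.2 hi).eq_or_lt with rfl | hi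
    · exact (Fin.cycleIcc_of_last hπm).symm
    · rw [hπ i hi, Fin.cycleIcc_of_gt hi]
  · rintro ⟨j, σ⟩ hp
    simp only [mem_product, mem_Iic, mem_permsSupportedBelow] at hp
    have hm : (Fin.cycleIcc j m * σ) m = j := by
      rw [mul_apply, hp.2 m le_rfl, Fin.cycleIcc_of_last hp.1]
    simp [hm]
  · intro π _
    simp

section Antisymmetrizer

variable {N : ℕ} {q : Fin N → Fin N → ℂ} (hq : ∀ a b, q a b * q b a = 1) {k : ℕ}

theorem lamPos_eq_qPermRep (t : ℕ) (h : t + 1 < k) :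
    lamPos q k t = qPermRep hq (swap ⟨t, by omega⟩ ⟨t + 1, h⟩) := by
  ext f g
  simp only [lamPos, h, ↓reduceDIte, qPermRep, MonoidHom.coe_mk, OneHom.coe_mk, Matrix.of_apply,
    inversionProd_swap_succ]

theorem Ical_succ_eq_sum (m : ℕ) (hm : m < k) :
    Ical q k (m + 1) = ∑ j ∈ Iic (⟨m, hm⟩ : Fin k),
      sign (Fin.cycleIcc j ⟨m, hm⟩) • qPermRep hq (Fin.cycleIcc j ⟨m, hm⟩) := by
  have : NeZero k := NeZero.of_pos (by omega)
  induction m with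
  | zero => simp [Ical]
  | succ m ih =>
    have hm' : m < k := by omega
    have hIic : Iic (⟨m + 1, hm⟩ : Fin k) = insert ⟨m + 1, hm⟩ (Iic ⟨m, hm'⟩) := by
      ext j
      simp only [mem_Iic, mem_insert, Fin.le_def, Fin.ext_iff]
      omega
    have hstep : ∀ j ∈ Iic (⟨m, hm'⟩ : Fin k),
        sign (Fin.cycleIcc j ⟨m, hm'⟩) • qPermRep hq (Fin.cycleIcc j ⟨m, hm'⟩) * lamPos q k m =
          -(sign (Fin.cycleIcc j ⟨m + 1, hm⟩) • qPermRep hq (Fin.cycleIcc j ⟨m + 1, hm⟩)) := by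
      intro j hj
      rw [lamPos_eq_qPermRep hq m hm, smul_mul_assoc, ← map_mul,
        ← Fin.cycleIcc_mul_swap (mem_Iic.1 hj) hm, Perm.sign_mul, sign_swap (by simp [Fin.ext_iff])]
      simp
    rw [Ical, ih hm', sum_mul, sum_congr rfl hstep, sum_neg_distrib, sub_neg_eq_add, hIic,
      sum_insert (by simp [Fin.le_def]), Fin.cycleIcc_eq, Perm.sign_one, map_one, one_smul]

theorem Wmat_eq_sum (m : ℕ) (hm : m ≤ k) :
    Wmat q k m = ∑ σ ∈ permsSupportedBelow k m, sign σ • qPermRep hq σ := by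
  induction m with
  | zero =>
    have : permsSupportedBelow k 0 = {1} := by
      ext σ
      simp [mem_permsSupportedBelow, Perm.ext_iff]
    simp [Wmat, this]
  | succ m ih =>
    rw [Wmat, Ical_succ_eq_sum hq m hm, ih (by omega), sum_mul_sum,
      sum_permsSupportedBelow_succ _ ⟨m, hm⟩]
    refine sum_congr rfl fun j _ => sum_congr rfl fun σ _ => ?_
    rw [map_mul, map_mul, smul_mul_smul_comm]

end Antisymmetrizer

theorem Wmat_idem_general {N : ℕ} (q : Fin N → Fin N → ℂ)
    (h2 : ∀ a b, q a b * q b a = 1) :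
    ∀ k : ℕ, Wmat q k k * Wmat q k k = (k.factorial : ℂ) • Wmat q k k := by
  intro k
  have hW : Wmat q k k = ∑ σ : Perm (Fin k), sign σ • qPermRep h2 σ := by
    rw [Wmat_eq_sum h2 k le_rfl]
    congr
    ext σ
    simp [mem_permsSupportedBelow]
  rw [hW, sum_smul_mul_self, Fintype.card_perm, Fintype.card_fin, Nat.cast_smul_eq_nsmul]

/-- the q-antisymmetrizer `W_{1...k}` on `(ℂ^N)^{⊗k}` satisfies
`W_{1...k} W_{1...k} = k! · W_{1...k}`. -/
theorem Wmat_idem {N : ℕ} (q : Fin N → Fin N → ℂ)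
    (h1 : ∀ a, q a a = 1)
    (h2 : ∀ a b, q a b * q b a = 1) :
    ∀ k : ℕ, Wmat q k k * Wmat q k k = (k.factorial : ℂ) • Wmat q k k :=
  Wmat_idem_general q h2
end

section
/- Partial trace recursion for the q-antisymmetrizer: with Λ^{ab}_{cd}=q(a,b)δ^a_d δ^b_c and the operators 𝓘_{1...k} = I − Λ_{k−1,k} + Λ_{k−2,k−1}Λ_{k−1,k} − ... , one has Tr_k(𝓘_{1...k}) = N·I − 𝓘_{1...k−1}, where Tr_k is the partial trace over the k-th tensor factor of (ℂ^N)^{⊗k}. -/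
open scoped Kronecker

theorem Function.comp_swap_of_apply_eq {ι β : Type*} [DecidableEq ι] {f : ι → β} {i j : ι}
    (h : f i = f j) : f ∘ Equiv.swap i j = f := by
  rw [Equiv.comp_swap_eq_update, h, Function.update_eq_self, ← h, Function.update_eq_self]

theorem Fin.snoc_comp_swap_castSucc {β : Type*} {n : ℕ} (f : Fin n → β) (x : β) (i j : Fin n) :
    Fin.snoc f x ∘ Equiv.swap i.castSucc j.castSucc = Fin.snoc (f ∘ Equiv.swap i j) x := by
  funext k
  induction k using Fin.lastCases with
  | last =>
    rw [Function.comp_apply, Equiv.swap_apply_of_ne_of_ne (Fin.castSucc_lt_last i).ne'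
      (Fin.castSucc_lt_last j).ne']
    simp
  | cast k =>
    rw [Function.comp_apply, (Fin.castSucc_injective n).swap_apply]
    simp

namespace Matrix

variable {α R : Type*} {m : ℕ}

theorem ext_snoc {M M' : Matrix (Fin (m + 1) → α) (Fin (m + 1) → α) R}
    (h : ∀ f x g y, M (Fin.snoc f x) (Fin.snoc g y) = M' (Fin.snoc f x) (Fin.snoc g y)) :
    M = M' := by
  ext F G
  rw [← Fin.snoc_init_self F, ← Fin.snoc_init_self G]
  exact h _ _ _ _

def partialTraceLast [Fintype α] [AddCommMonoid R]
    (M : Matrix (Fin (m + 1) → α) (Fin (m + 1) → α) R) :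
    Matrix (Fin m → α) (Fin m → α) R :=
  of fun f g => ∑ x, M (Fin.snoc f x) (Fin.snoc g x)

@[simp]
theorem partialTraceLast_apply [Fintype α] [AddCommMonoid R]
    (M : Matrix (Fin (m + 1) → α) (Fin (m + 1) → α) R) (f g : Fin m → α) :
    partialTraceLast M f g = ∑ x, M (Fin.snoc f x) (Fin.snoc g x) := rfl

theorem partialTraceLast_sub [Fintype α] [AddCommGroup R]
    (M M' : Matrix (Fin (m + 1) → α) (Fin (m + 1) → α) R) :
    partialTraceLast (M - M') = partialTraceLast M - partialTraceLast M' := by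
  ext f g
  simp [Finset.sum_sub_distrib]

variable [Fintype α] [DecidableEq α] [CommSemiring R]

theorem partialTraceLast_one :
    partialTraceLast (1 : Matrix (Fin (m + 1) → α) (Fin (m + 1) → α) R) =
      (Fintype.card α : R) • 1 := by
  ext f g
  simp [one_apply]

def extendLast :
    Matrix (Fin m → α) (Fin m → α) R →+* Matrix (Fin (m + 1) → α) (Fin (m + 1) → α) R where
  toFun A :=
    reindexRingEquiv R ((Equiv.prodComm _ _).trans (Fin.snocEquiv fun _ => α)) (A ⊗ₖ 1)
  map_one' := by rw [one_kronecker_one, map_one]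
  map_mul' A B := by rw [← map_mul, ← mul_kronecker_mul, mul_one]
  map_zero' := by rw [zero_kronecker, map_zero]
  map_add' A B := by rw [add_kronecker, map_add]

theorem extendLast_apply_snoc (A : Matrix (Fin m → α) (Fin m → α) R) (f g : Fin m → α)
    (x y : α) :
    extendLast A (Fin.snoc f x) (Fin.snoc g y) = if x = y then A f g else 0 := by
  simp [extendLast, Fin.snocEquiv, one_apply]

theorem partialTraceLast_extendLast_mul (A : Matrix (Fin m → α) (Fin m → α) R)
    (M : Matrix (Fin (m + 1) → α) (Fin (m + 1) → α) R) :
    partialTraceLast (extendLast A * M) = A * partialTraceLast M := by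
  ext f g
  have hsnoc (x : α) : ∑ F, extendLast A (Fin.snoc f x) F * M F (Fin.snoc g x) =
      ∑ h, A f h * M (Fin.snoc h x) (Fin.snoc g x) := by
    rw [← (Fin.snocEquiv fun _ => α).sum_comp, Fintype.sum_prod_type_right]
    simp [Fin.snocEquiv, extendLast_apply_snoc]
  simp only [partialTraceLast_apply, mul_apply, hsnoc, Finset.mul_sum]
  exact Finset.sum_comm

end Matrix

open Matrix

section

variable {N : ℕ} (q : Fin N → Fin N → ℂ)

theorem lamPos_apply {k t : ℕ} (h : t + 1 < k) (F G : Fin k → Fin N) :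
    lamPos q k t F G = if G = F ∘ Equiv.swap ⟨t, by omega⟩ ⟨t + 1, h⟩
      then q (F ⟨t, by omega⟩) (F ⟨t + 1, h⟩) else 0 := by
  simp [lamPos, h]

theorem lamPos_eq_extendLast {m t : ℕ} (ht : t + 1 < m + 1) :
    lamPos q (m + 2) t = extendLast (lamPos q (m + 1) t) := by
  refine ext_snoc fun f x g y => ?_
  rw [extendLast_apply_snoc, lamPos_apply q (by omega : t + 1 < m + 2), lamPos_apply q ht]
  simp only [show (⟨t, _⟩ : Fin (m + 2)) = Fin.castSucc ⟨t, by omega⟩ from rfl,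
    show (⟨t + 1, _⟩ : Fin (m + 2)) = Fin.castSucc ⟨t + 1, ht⟩ from rfl,
    Fin.snoc_comp_swap_castSucc, Fin.snoc_castSucc, Fin.snoc_inj]
  by_cases hxy : x = y <;> simp [hxy, eq_comm]

theorem lamPos_snoc_snoc_last {m : ℕ} (h g : Fin (m + 1) → Fin N) (x : Fin N) :
    lamPos q (m + 2) m (Fin.snoc h x) (Fin.snoc g x) =
      if h = g ∧ h (Fin.last m) = x then q x x else 0 := by
  rw [lamPos_apply q (by omega)]
  simp only [show (⟨m, _⟩ : Fin (m + 2)) = Fin.castSucc (Fin.last m) from rfl,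
    show (⟨m + 1, _⟩ : Fin (m + 2)) = Fin.last (m + 1) from rfl, Fin.snoc_castSucc,
    Fin.snoc_last]
  have hswap :
      Fin.snoc g x = Fin.snoc h x ∘ Equiv.swap (Fin.last m).castSucc (Fin.last (m + 1)) ↔
        h = g ∧ h (Fin.last m) = x := by
    constructor
    · intro hG
      have hx : h (Fin.last m) = x := by simpa using (congrFun hG (Fin.last _)).symm
      rw [Function.comp_swap_of_apply_eq (by simp [hx])] at hG
      exact ⟨(Fin.snoc_inj.1 hG).1.symm, hx⟩
    · rintro ⟨rfl, rfl⟩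
      rw [Function.comp_swap_of_apply_eq (by simp)]
  by_cases hc : h = g ∧ h (Fin.last m) = x
  · rw [if_pos (hswap.2 hc), if_pos hc, hc.2]
  · rw [if_neg (mt hswap.1 hc), if_neg hc]

theorem partialTraceLast_lamPos_last (hq : ∀ a, q a a = 1) (m : ℕ) :
    partialTraceLast (lamPos q (m + 2) m) = 1 := by
  ext h g
  simp [lamPos_snoc_snoc_last, hq, one_apply, ite_and]

theorem Ical_eq_extendLast {m : ℕ} : ∀ {j : ℕ}, j ≤ m + 1 →
    Ical q (m + 2) j = extendLast (Ical q (m + 1) j)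
  | 0, _ => by rw [Ical, Ical, map_one]
  | 1, _ => by rw [Ical, Ical, map_one]
  | j + 2, hj => by
    rw [Ical, Ical, Ical_eq_extendLast (by omega), lamPos_eq_extendLast q (by omega), map_sub,
      map_mul, map_one]

end

theorem Ical_partial_trace_general {N : ℕ} (q : Fin N → Fin N → ℂ)
    (h1 : ∀ a, q a a = 1) :
    ∀ (m : ℕ) (f g : Fin (m + 1) → Fin N),
      ∑ x : Fin N, Ical q (m + 2) (m + 2) (Fin.snoc f x) (Fin.snoc g x)
        = (N : ℂ) * (1 : Matrix (Fin (m + 1) → Fin N) (Fin (m + 1) → Fin N) ℂ) f g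
          - Ical q (m + 1) (m + 1) f g := by
  intro m f g
  have hIcal : Ical q (m + 2) (m + 2) =
      1 - extendLast (Ical q (m + 1) (m + 1)) * lamPos q (m + 2) m := by
    rw [Ical, Ical_eq_extendLast q le_rfl]
  calc ∑ x, Ical q (m + 2) (m + 2) (Fin.snoc f x) (Fin.snoc g x)
      = partialTraceLast (Ical q (m + 2) (m + 2)) f g := rfl
    _ = ((N : ℂ) • 1 - Ical q (m + 1) (m + 1)) f g := by
      rw [hIcal, partialTraceLast_sub, partialTraceLast_one, partialTraceLast_extendLast_mul,
        partialTraceLast_lamPos_last q h1, mul_one, Fintype.card_fin]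
    _ = _ := by rw [Matrix.sub_apply, Matrix.smul_apply, smul_eq_mul]

/-- partial trace recursion for the q-antisymmetrizer operators:
`Tr_k(𝓘_{1...k}) = N·I − 𝓘_{1...k−1}`, where `Tr_k` is the partial trace over
the last tensor factor (stated for `k = m+2 ≥ 2`). -/
theorem Ical_partial_trace {N : ℕ} (q : Fin N → Fin N → ℂ)
    (h1 : ∀ a, q a a = 1)
    (h2 : ∀ a b, q a b * q b a = 1) :
    ∀ (m : ℕ) (f g : Fin (m + 1) → Fin N),
      ∑ x : Fin N, Ical q (m + 2) (m + 2) (Fin.snoc f x) (Fin.snoc g x)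
        = (N : ℂ) * (1 : Matrix (Fin (m + 1) → Fin N) (Fin (m + 1) → Fin N) ℂ) f g
          - Ical q (m + 1) (m + 1) f g :=
  Ical_partial_trace_general q h1
end

section
/- Epsilon contraction formula: for the q-antisymmetrizer W on N letters and the q-epsilon tensors, Σ_{l_{k+1},...,l_N} ε_q^{i_1...i_k l_{k+1}...l_N} · ε_{q^{-1}}_{j_1...j_k l_{k+1}...l_N} = (N−k)! · W^{i_1...i_k}_{j_1...j_k}. -/
/-!
Call `inversionProd q α β f` the product of `−q(f x, f y)` over the pairs that `α` orders and `β`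
reverses. Since `q(a, b) q(b, a) = 1`, these products compose: `(α, β)` followed by `(β, γ)` gives
`(α, γ)`. Hence the matrices `P_σ : e_f ↦ inversionProd q id σ⁻¹ f · e_{f ∘ σ}` form a
representation of the symmetric group with `Λ_t = −P_{s_t}`, and the recursion for the
q-antisymmetrizer, run through the cycles `(v v+1 … m)`, unfolds to `W = Σ_σ P_σ`. So `W^i_j`
vanishes unless `j = i ∘ σ`, and it equals the weight of `σ` on `i` when `i` is injective. When `i`
repeats a letter, `W^i_j` vanishes too: `P_π W = W` moves the repetition to adjacent positions, and
there `P_{s_t} W = W` makes the row equal to its own negative.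

`ε_q(i l)` and `ε_{q⁻¹}(j l)` are inversion products that compare positions with letters. So for
`j = i ∘ σ` their product is again the weight of `σ` on `i` whenever the letters of `(i, l)` are
distinct, and there are `(N − k)!` such tails `l`.
-/

namespace QAntisymmetrizer

open Equiv Finset Function

section InversionProd

variable {ι ι' κ A R : Type*} [Fintype ι] [Fintype ι'] [LinearOrder κ] [CommRing R]

def inversionProd (Q : A → A → R) (α β : ι → κ) (f : ι → A) : R :=
  ∏ p : ι × ι, if α p.1 < α p.2 ∧ β p.2 < β p.1 then -Q (f p.1) (f p.2) else 1

theorem prod_eq_prod_lt_mul_swap {M : Type*} [CommMonoid M] {α : ι → κ} (hα : Injective α)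
    (G : ι × ι → M) (hG : ∀ x, G (x, x) = 1) :
    ∏ p, G p = ∏ p, if α p.1 < α p.2 then G p * G p.swap else 1 := by
  have hswap : ∏ p : ι × ι, (if α p.1 < α p.2 then G p.swap else 1)
      = ∏ p : ι × ι, if α p.2 < α p.1 then G p else 1 :=
    Fintype.prod_equiv (Equiv.prodComm ι ι) _ _ fun p => rfl
  have hsplit : ∀ p : ι × ι, (if α p.1 < α p.2 then G p * G p.swap else 1)
      = (if α p.1 < α p.2 then G p else 1) * if α p.1 < α p.2 then G p.swap else 1 := by
    intro p; split_ifs <;> simp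
  rw [prod_congr rfl fun p _ => hsplit p, prod_mul_distrib, hswap, ← prod_mul_distrib]
  refine prod_congr rfl fun ⟨x, y⟩ _ => ?_
  rcases lt_trichotomy (α x) (α y) with h | h | h
  · simp [h, h.not_gt]
  · obtain rfl := hα h
    simp [hG]
  · simp [h, h.not_gt]

variable (Q : A → A → R)

theorem inversionProd_comp_equiv (e : ι' ≃ ι) (α β : ι → κ) (f : ι → A) :
    inversionProd Q (α ∘ e) (β ∘ e) (f ∘ e) = inversionProd Q α β f :=
  Fintype.prod_equiv (e.prodCongr e) _ _ fun _ => rfl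

theorem inversionProd_flip (α β : ι → κ) (f : ι → A) :
    inversionProd Q α β f = inversionProd (flip Q) β α f :=
  Fintype.prod_equiv (Equiv.prodComm ι ι) _ _ fun _ => by simp [flip, and_comm]

theorem inversionProd_strictMono_comp {κ' : Type*} [LinearOrder κ'] {g : κ → κ'}
    (hg : StrictMono g) (α β : ι → κ) (f : ι → A) :
    inversionProd Q (g ∘ α) (g ∘ β) f = inversionProd Q α β f := by
  simp only [inversionProd, comp_apply, hg.lt_iff_lt]

theorem inversionProd_self (α : ι → κ) (f : ι → A) : inversionProd Q α α f = 1 :=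
  prod_eq_one fun _ _ => if_neg fun h => h.1.not_gt h.2

theorem inversionProd_of_embedding (φ : ι' ↪ ι) {α β : ι → κ}
    (hαβ : ∀ x y, (x ∉ Set.range φ ∨ y ∉ Set.range φ) → (α x < α y ↔ β x < β y))
    (f : ι → A) :
    inversionProd Q α β f = inversionProd Q (α ∘ φ) (β ∘ φ) (f ∘ φ) := by
  let F : ι × ι → R := fun p => if α p.1 < α p.2 ∧ β p.2 < β p.1 then -Q (f p.1) (f p.2) else 1
  calc inversionProd Q α β f = ∏ p ∈ univ.map (φ.prodMap φ), F p := by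
        refine (prod_subset (subset_univ _) fun ⟨x, y⟩ _ hxy => if_neg ?_).symm
        rintro ⟨hlt, hgt⟩
        have hout : x ∉ Set.range φ ∨ y ∉ Set.range φ := by
          by_contra! hin
          obtain ⟨⟨x', rfl⟩, ⟨y', rfl⟩⟩ := hin
          exact hxy (mem_map_of_mem _ (mem_univ (x', y')))
        exact ((hαβ x y hout).1 hlt).not_gt hgt
    _ = inversionProd Q (α ∘ φ) (β ∘ φ) (f ∘ φ) := prod_map _ _ _

theorem inversionProd_mul_inversionProd (hQ : ∀ a b, Q a b * Q b a = 1) {α β γ : ι → κ}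
    (hα : Injective α) (hβ : Injective β) (hγ : Injective γ) (f : ι → A) :
    inversionProd Q α β f * inversionProd Q β γ f = inversionProd Q α γ f := by
  simp only [inversionProd, ← prod_mul_distrib]
  rw [prod_eq_prod_lt_mul_swap hα _ (by simp), prod_eq_prod_lt_mul_swap hα _ (by simp)]
  refine prod_congr rfl fun ⟨x, y⟩ _ => ?_
  -- For a pair ordered by `α`, the sides can only differ when `β` reverses it and `γ` restores
  -- it; then the left side is `(-Q a b) * (-Q b a) = 1`.
  have hω : -Q (f x) (f y) * -Q (f y) (f x) = 1 := by rw [neg_mul_neg, hQ]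
  by_cases hxy : α x < α y
  · have hne : x ≠ y := fun h => by simp [h] at hxy
    rcases (hβ.ne hne).lt_or_gt with hb | hb <;> rcases (hγ.ne hne).lt_or_gt with hc | hc <;>
      simp [hxy, hxy.not_gt, hb, hb.not_gt, hc, hc.not_gt, hω]
  · simp [hxy]

theorem inversionProd_perm_mul [LinearOrder ι] (hQ : ∀ a b, Q a b * Q b a = 1) (σ τ : Perm ι)
    (f : ι → A) :
    inversionProd Q id ⇑(σ * τ)⁻¹ f
      = inversionProd Q id ⇑σ⁻¹ f * inversionProd Q id ⇑τ⁻¹ (f ∘ σ) := by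
  have hτ : inversionProd Q id ⇑τ⁻¹ (f ∘ σ) = inversionProd Q ⇑σ⁻¹ ⇑(σ * τ)⁻¹ f := by
    rw [← inversionProd_comp_equiv Q σ ⇑σ⁻¹ ⇑(σ * τ)⁻¹ f]
    congr 1 <;> ext <;> simp [mul_inv_rev]
  rw [hτ, inversionProd_mul_inversionProd Q hQ injective_id (σ⁻¹).injective
    ((σ * τ)⁻¹).injective]

end InversionProd

section PermMat

variable {N k : ℕ} (q : Fin N → Fin N → ℂ)

def permMat (σ : Perm (Fin k)) : Matrix (Fin k → Fin N) (Fin k → Fin N) ℂ :=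
  Matrix.of fun f g => if g = f ∘ σ then inversionProd q id ⇑σ⁻¹ f else 0

theorem permMat_mul_apply (π : Perm (Fin k)) (M : Matrix (Fin k → Fin N) (Fin k → Fin N) ℂ)
    (f g : Fin k → Fin N) :
    (permMat q π * M) f g = inversionProd q id ⇑π⁻¹ f * M (f ∘ π) g := by
  simp [Matrix.mul_apply, permMat, ite_mul]

theorem permMat_one : permMat q (1 : Perm (Fin k)) = 1 := by
  ext f g
  simp [permMat, inversionProd_self, Matrix.one_apply, eq_comm]

theorem permMat_mul_permMat (hq : ∀ a b, q a b * q b a = 1) (σ τ : Perm (Fin k)) :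
    permMat q σ * permMat q τ = permMat q (σ * τ) := by
  ext f g
  rw [permMat_mul_apply]
  simp only [permMat, Matrix.of_apply, Perm.coe_mul, comp_assoc, mul_ite, mul_zero,
    inversionProd_perm_mul q hq]

theorem swap_succ_lt_swap_succ_iff {t : ℕ} (ht : t + 1 < k) {x y : Fin k}
    (hxy : (x, y) ≠ (⟨t, by omega⟩, ⟨t + 1, ht⟩)) (hyx : (y, x) ≠ (⟨t, by omega⟩, ⟨t + 1, ht⟩)) :
    swap (⟨t, by omega⟩ : Fin k) ⟨t + 1, ht⟩ x < swap (⟨t, by omega⟩ : Fin k) ⟨t + 1, ht⟩ y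
      ↔ x < y := by
  simp only [swap_apply_def, Fin.lt_def, Fin.ext_iff, ne_eq, Prod.mk.injEq] at *
  split_ifs <;> simp only at * <;> omega

theorem inversionProd_swap_succ {A R : Type*} [CommRing R] (Q : A → A → R) {t : ℕ}
    (ht : t + 1 < k) (f : Fin k → A) :
    inversionProd Q id ⇑(swap (⟨t, by omega⟩ : Fin k) ⟨t + 1, ht⟩) f
      = -Q (f ⟨t, by omega⟩) (f ⟨t + 1, ht⟩) := by
  rw [inversionProd, prod_eq_single (⟨t, by omega⟩, ⟨t + 1, ht⟩)]
  · simp [Fin.lt_def]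
  · rintro ⟨x, y⟩ _ hne
    refine if_neg fun ⟨hlt, hgt⟩ => ?_
    simp only [id] at hlt hgt
    rw [swap_succ_lt_swap_succ_iff ht ?_ hne] at hgt
    · exact hgt.not_gt hlt
    · rintro ⟨rfl, rfl⟩
      simp [Fin.lt_def] at hlt
  · simp

theorem lamPos_eq_neg_permMat {t : ℕ} (ht : t + 1 < k) :
    lamPos q k t = -permMat q (swap (⟨t, by omega⟩ : Fin k) ⟨t + 1, ht⟩) := by
  ext f g
  simp only [lamPos, ht, ↓reduceDIte, permMat, swap_inv, Matrix.neg_apply, Matrix.of_apply,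
    inversionProd_swap_succ q ht]
  split_ifs <;> simp

end PermMat

section Cycles

variable {k : ℕ}

theorem cycleIcc_succ_eq_swap {t : ℕ} (ht : t + 1 < k) :
    Fin.cycleIcc (⟨t, by omega⟩ : Fin k) ⟨t + 1, ht⟩ = swap ⟨t, by omega⟩ ⟨t + 1, ht⟩ := by
  have : NeZero k := ⟨by omega⟩
  ext x
  by_cases hlt : x.val < t
  · rw [Fin.cycleIcc_of_lt (Fin.lt_def.mpr hlt), swap_apply_of_ne_of_ne] <;>
      simp only [ne_eq, Fin.ext_iff] <;> omega
  by_cases hgt : t + 1 < x.val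
  · rw [Fin.cycleIcc_of_gt (Fin.lt_def.mpr hgt), swap_apply_of_ne_of_ne] <;>
      simp only [ne_eq, Fin.ext_iff] <;> omega
  rw [Fin.cycleIcc_of_le_of_le (Fin.le_def.mpr (by simp only; omega))
    (Fin.le_def.mpr (by simp only; omega))]
  rcases (show x.val = t ∨ x.val = t + 1 by omega) with hx | hx
  · have hx' : x = ⟨t, by omega⟩ := Fin.ext hx
    rw [hx']
    simp [Fin.val_add, Nat.one_mod_eq_one.mpr (show k ≠ 1 by omega), Nat.mod_eq_of_lt ht]
  · have hx' : x = ⟨t + 1, ht⟩ := Fin.ext hx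
    rw [hx']
    simp

theorem cycleIcc_mul_swap_succ {v : Fin k} {t : ℕ} (ht : t + 1 < k) (hv : v ≤ ⟨t, by omega⟩) :
    Fin.cycleIcc v ⟨t, by omega⟩ * swap ⟨t, by omega⟩ ⟨t + 1, ht⟩ = Fin.cycleIcc v ⟨t + 1, ht⟩ := by
  have : NeZero k := ⟨by omega⟩
  rw [← cycleIcc_succ_eq_swap ht]
  exact DFunLike.coe_injective (Fin.cycleIcc.trans hv (Fin.le_def.mpr (by simp)))

def permsBelow (k m : ℕ) : Finset (Perm (Fin k)) :=
  univ.filter fun σ => ∀ p : Fin k, m ≤ p.val → σ p = p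

@[simp]
theorem mem_permsBelow {m : ℕ} {σ : Perm (Fin k)} :
    σ ∈ permsBelow k m ↔ ∀ p : Fin k, m ≤ p.val → σ p = p := by
  simp [permsBelow]

/-- Coset decomposition of the permutations of the first `m + 1` positions along the stabilizer of
`m`, with the cycles `(v v+1 … m)` as representatives. -/
theorem sum_cycleIcc_mul_permsBelow {M : Type*} [AddCommMonoid M] (F : Perm (Fin k) → M)
    {m : ℕ} (hm : m < k) :
    ∑ x ∈ Iic (⟨m, hm⟩ : Fin k) ×ˢ permsBelow k m, F (Fin.cycleIcc x.1 ⟨m, hm⟩ * x.2)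
      = ∑ π ∈ permsBelow k (m + 1), F π := by
  have : NeZero k := ⟨by omega⟩
  set T : Fin k := ⟨m, hm⟩
  have hT : ∀ p : Fin k, T < p ↔ m + 1 ≤ p.val := fun p => Fin.lt_def
  refine sum_nbij' (fun x => Fin.cycleIcc x.1 T * x.2)
    (fun π => (π T, (Fin.cycleIcc (π T) T)⁻¹ * π)) ?_ ?_ ?_ (fun _ _ => mul_inv_cancel_left _ _)
    fun _ _ => rfl
  all_goals simp only [mem_product, mem_Iic, mem_permsBelow]
  · rintro ⟨v, τ⟩ ⟨hv, hτ⟩ p hp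
    simp only [Perm.mul_apply, hτ p (by omega), Fin.cycleIcc_of_gt ((hT p).mpr hp)]
  · intro π hπ
    have hπT : π T ≤ T := by
      by_contra! h
      exact h.ne' (π.injective (hπ (π T) ((hT _).mp h)))
    refine ⟨hπT, fun p hp => ?_⟩
    rw [Perm.mul_apply, Perm.inv_eq_iff_eq]
    rcases hp.eq_or_lt with hp | hp
    · rw [show p = T from Fin.ext hp.symm, Fin.cycleIcc_of_last hπT]
    · rw [hπ p hp, Fin.cycleIcc_of_gt ((hT p).mpr hp)]
  · rintro ⟨v, τ⟩ ⟨hv, hτ⟩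
    have hτT : τ T = T := hτ T le_rfl
    simp [hτT, Fin.cycleIcc_of_last hv]

end Cycles

section Antisymmetrizer

variable {N k : ℕ} (q : Fin N → Fin N → ℂ)

theorem Ical_succ_eq_sum (hq : ∀ a b, q a b * q b a = 1) {m : ℕ} (hm : m < k) :
    Ical q k (m + 1) = ∑ v ∈ Iic (⟨m, hm⟩ : Fin k), permMat q (Fin.cycleIcc v ⟨m, hm⟩) := by
  have : NeZero k := ⟨by omega⟩
  induction m with
  | zero =>
    simp [permMat_one, Ical]
  | succ m ih =>
    have hIio : Iio (⟨m + 1, hm⟩ : Fin k) = Iic ⟨m, by omega⟩ := by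
      ext v; simp only [mem_Iic, mem_Iio, Fin.le_def, Fin.lt_def]; omega
    rw [Ical, ih (by omega), lamPos_eq_neg_permMat q hm, mul_neg, sub_neg_eq_add, sum_mul,
      Iic_eq_cons_Iio (⟨m + 1, hm⟩ : Fin k), sum_cons, Fin.cycleIcc_eq, permMat_one, hIio]
    congr 1
    refine sum_congr rfl fun v hv => ?_
    rw [permMat_mul_permMat q hq, cycleIcc_mul_swap_succ hm (mem_Iic.mp hv)]

theorem Wmat_eq_sum_permsBelow (hq : ∀ a b, q a b * q b a = 1) {m : ℕ} (hm : m ≤ k) :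
    Wmat q k m = ∑ σ ∈ permsBelow k m, permMat q σ := by
  induction m with
  | zero =>
    have h0 : permsBelow k 0 = {1} := by
      ext σ; simp [Equiv.ext_iff]
    simp [h0, permMat_one, Wmat]
  | succ m ih =>
    rw [Wmat, Ical_succ_eq_sum q hq (by omega), ih (by omega), sum_mul_sum, ← sum_product',
      ← sum_cycleIcc_mul_permsBelow _ (by omega)]
    exact sum_congr rfl fun x _ => permMat_mul_permMat q hq _ _

theorem Wmat_eq_sum (hq : ∀ a b, q a b * q b a = 1) :
    Wmat q k k = ∑ σ : Perm (Fin k), permMat q σ := by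
  rw [Wmat_eq_sum_permsBelow q hq le_rfl]
  congr 1
  ext σ
  simp only [mem_permsBelow, mem_univ, iff_true]
  exact fun p hp => absurd p.isLt (by omega)

theorem Wmat_apply (hq : ∀ a b, q a b * q b a = 1) (f g : Fin k → Fin N) :
    Wmat q k k f g = ∑ σ : Perm (Fin k), if g = f ∘ σ then inversionProd q id ⇑σ⁻¹ f else 0 := by
  simp [Wmat_eq_sum q hq, Matrix.sum_apply, permMat]

theorem Wmat_apply_comp_of_injective (hq : ∀ a b, q a b * q b a = 1) {f : Fin k → Fin N}
    (hf : Injective f) (σ : Perm (Fin k)) :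
    Wmat q k k f (f ∘ σ) = inversionProd q id ⇑σ⁻¹ f := by
  rw [Wmat_apply q hq, sum_eq_single σ (fun τ _ hτ => if_neg fun h => hτ ?_) (by simp), if_pos rfl]
  exact DFunLike.coe_injective (hf.comp_left h).symm

theorem Wmat_apply_eq_zero_of_forall_ne (hq : ∀ a b, q a b * q b a = 1) {f g : Fin k → Fin N}
    (h : ∀ σ : Perm (Fin k), g ≠ f ∘ σ) : Wmat q k k f g = 0 := by
  rw [Wmat_apply q hq]
  exact sum_eq_zero fun σ _ => if_neg (h σ)

theorem permMat_mul_Wmat (hq : ∀ a b, q a b * q b a = 1) (π : Perm (Fin k)) :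
    permMat q π * Wmat q k k = Wmat q k k := by
  simp only [Wmat_eq_sum q hq, mul_sum, permMat_mul_permMat q hq]
  exact Fintype.sum_equiv (Equiv.mulLeft π) _ _ fun _ => rfl

theorem Wmat_apply_eq_zero_of_eq_succ (h1 : ∀ a, q a a = 1) (hq : ∀ a b, q a b * q b a = 1)
    {t : ℕ} (ht : t + 1 < k) {f : Fin k → Fin N} (hf : f ⟨t, by omega⟩ = f ⟨t + 1, ht⟩)
    (g : Fin k → Fin N) : Wmat q k k f g = 0 := by
  set s : Perm (Fin k) := swap ⟨t, by omega⟩ ⟨t + 1, ht⟩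
  have hfs : f ∘ s = f := by
    ext x
    by_cases h₁ : x = ⟨t, by omega⟩
    · simp [s, h₁, hf]
    by_cases h₂ : x = ⟨t + 1, ht⟩
    · simp [s, h₂, hf]
    simp [s, swap_apply_of_ne_of_ne h₁ h₂]
  have hW := congrFun (congrFun (permMat_mul_Wmat q hq s) f) g
  rw [permMat_mul_apply, hfs, swap_inv, inversionProd_swap_succ q ht, hf, h1] at hW
  linear_combination -hW / 2

theorem Wmat_apply_eq_zero_of_not_injective (h1 : ∀ a, q a a = 1)
    (hq : ∀ a b, q a b * q b a = 1) {f : Fin k → Fin N} (hf : ¬Injective f)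
    (g : Fin k → Fin N) : Wmat q k k f g = 0 := by
  obtain ⟨a, b, hab, hne⟩ := not_injective_iff.mp hf
  wlog hlt : a < b generalizing a b
  · exact this b a hab.symm hne.symm (hne.lt_or_gt.resolve_left hlt)
  have ht : b.val - 1 + 1 < k := by omega
  -- `π` moves the letter at `a` next to its copy at `b`.
  set π : Perm (Fin k) := swap a ⟨b.val - 1, by omega⟩
  have hW := congrFun (congrFun (permMat_mul_Wmat q hq π) f) g
  rw [permMat_mul_apply, Wmat_apply_eq_zero_of_eq_succ q h1 hq ht ?_, mul_zero] at hW
  · exact hW.symm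
  · have hb : (⟨b.val - 1 + 1, ht⟩ : Fin k) = b := Fin.ext (by simp only; omega)
    simp only [comp_apply, π, swap_apply_right, hb]
    rw [swap_apply_of_ne_of_ne hne.symm (by simp only [ne_eq, Fin.ext_iff]; omega), hab]

end Antisymmetrizer

section Epsilon

variable {N k m : ℕ}

theorem epsQ_of_injective (Q : Fin N → Fin N → ℂ) {w : Fin N → Fin N} (hw : Injective w) :
    epsQ Q w = inversionProd Q id w w := by
  rw [epsQ, if_pos hw, prod_filter]
  rfl

theorem epsQ_inv_of_injective (q : Fin N → Fin N → ℂ) (hq : ∀ a b, q a b * q b a = 1)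
    {w : Fin N → Fin N} (hw : Injective w) :
    epsQ (fun a b => (q a b)⁻¹) w = inversionProd q w id w := by
  have hflip : flip (fun a b => (q a b)⁻¹) = q :=
    funext₂ fun a b => inv_eq_of_mul_eq_one_left (hq a b)
  rw [epsQ_of_injective _ hw, inversionProd_flip, hflip]

def appendEquiv (h : N = k + m) : Fin k ⊕ Fin m ≃ Fin N :=
  finSumFinEquiv.trans (finCongr h.symm)

theorem appendEquiv_inl_lt_inr (h : N = k + m) (a : Fin k) (b : Fin m) :
    appendEquiv h (Sum.inl a) < appendEquiv h (Sum.inr b) := by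
  simpa [appendEquiv, Fin.lt_def] using Nat.lt_add_right b.val a.isLt

theorem strictMono_appendEquiv_inl (h : N = k + m) : StrictMono (appendEquiv h ∘ Sum.inl) :=
  fun _ _ hab => Fin.strictMono_castAdd m hab

theorem append_cast_comp_appendEquiv (h : N = k + m) (u : Fin k → Fin N) (l : Fin m → Fin N) :
    (fun t => Fin.append u l (Fin.cast h t)) ∘ appendEquiv h = Sum.elim u l := by
  ext (a | b) <;> simp [appendEquiv]

theorem injective_append_cast_iff (h : N = k + m) {u : Fin k → Fin N} {l : Fin m → Fin N} :
    Injective (fun t => Fin.append u l (Fin.cast h t)) ↔ Injective (Sum.elim u l) := by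
  rw [← append_cast_comp_appendEquiv h, EquivLike.injective_comp]

theorem epsQ_append_eq_zero (Q : Fin N → Fin N → ℂ) (h : N = k + m) {u : Fin k → Fin N}
    {l : Fin m → Fin N} (hul : ¬Injective (Sum.elim u l)) :
    epsQ Q (fun t => Fin.append u l (Fin.cast h t)) = 0 :=
  if_neg (mt (injective_append_cast_iff h).mp hul)

theorem epsQ_append (Q : Fin N → Fin N → ℂ) (h : N = k + m) {u : Fin k → Fin N}
    {l : Fin m → Fin N} (hul : Injective (Sum.elim u l)) :
    epsQ Q (fun t => Fin.append u l (Fin.cast h t))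
      = inversionProd Q (appendEquiv h) (Sum.elim u l) (Sum.elim u l) := by
  rw [epsQ_of_injective Q ((injective_append_cast_iff h).mpr hul),
    ← inversionProd_comp_equiv Q (appendEquiv h), append_cast_comp_appendEquiv]
  rfl

theorem epsQ_inv_append (q : Fin N → Fin N → ℂ) (hq : ∀ a b, q a b * q b a = 1)
    (h : N = k + m) {u : Fin k → Fin N} {l : Fin m → Fin N} (hul : Injective (Sum.elim u l)) :
    epsQ (fun a b => (q a b)⁻¹) (fun t => Fin.append u l (Fin.cast h t))
      = inversionProd q (Sum.elim u l) (appendEquiv h) (Sum.elim u l) := by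
  rw [epsQ_inv_of_injective q hq ((injective_append_cast_iff h).mpr hul),
    ← inversionProd_comp_equiv q (appendEquiv h), append_cast_comp_appendEquiv]
  rfl

theorem epsQ_mul_epsQ_inv_append (q : Fin N → Fin N → ℂ) (hq : ∀ a b, q a b * q b a = 1)
    (h : N = k + m) {u : Fin k → Fin N} {l : Fin m → Fin N} (hul : Injective (Sum.elim u l))
    (σ : Perm (Fin k)) :
    epsQ q (fun t => Fin.append u l (Fin.cast h t))
      * epsQ (fun a b => (q a b)⁻¹) (fun t => Fin.append (u ∘ σ) l (Fin.cast h t))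
      = inversionProd q id ⇑σ⁻¹ u := by
  set e := appendEquiv h
  set ρ : Perm (Fin k ⊕ Fin m) := σ.sumCongr (Equiv.refl _)
  have hρ : Sum.elim (u ∘ σ) l = Sum.elim u l ∘ ρ := by ext (a | b) <;> rfl
  -- Off the block of `u`, `ρ` changes no relative order, so only pairs inside it contribute.
  have hagree : ∀ x y, (x ∉ Set.range Sum.inl ∨ y ∉ Set.range Sum.inl) →
      (e x < e y ↔ (e ∘ ρ.symm) x < (e ∘ ρ.symm) y) := by
    rintro (a | b) (a' | b') hxy
    · simp at hxy
    · simp [ρ, e, appendEquiv_inl_lt_inr]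
    · simp [ρ, e, (appendEquiv_inl_lt_inr h _ _).not_gt]
    · simp [ρ]
  calc _ = inversionProd q e (Sum.elim u l) (Sum.elim u l)
        * inversionProd q (Sum.elim u l ∘ ρ) ((e ∘ ρ.symm) ∘ ρ) (Sum.elim u l ∘ ρ) := by
        rw [epsQ_append q h hul, epsQ_inv_append q hq h (hρ ▸ hul.comp ρ.injective), hρ]
        congr 2
        ext x
        simp [e]
    _ = inversionProd q e (e ∘ ρ.symm) (Sum.elim u l) := by
        rw [inversionProd_comp_equiv, inversionProd_mul_inversionProd q hq e.injective hul
          (e.injective.comp ρ.symm.injective)]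
    _ = inversionProd q (e ∘ Sum.inl) ((e ∘ Sum.inl) ∘ ⇑σ⁻¹) u :=
        inversionProd_of_embedding q Embedding.inl hagree _
    _ = inversionProd q id ⇑σ⁻¹ u :=
        inversionProd_strictMono_comp q (strictMono_appendEquiv_inl h) _ _ _

theorem exists_perm_of_injective_sumElim (h : N = k + m) {i j : Fin k → Fin N}
    {l : Fin m → Fin N} (hi : Injective (Sum.elim i l)) (hj : Injective (Sum.elim j l)) :
    ∃ σ : Perm (Fin k), j = i ∘ σ := by
  have hsurj : Surjective (Sum.elim i l) :=
    ((Fintype.bijective_iff_injective_and_card _).mpr ⟨hi, by simp [h]⟩).2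
  have hrange : ∀ a, ∃ a', i a' = j a := by
    intro a
    obtain ⟨a' | b, hx⟩ := hsurj (j a)
    · exact ⟨a', hx⟩
    · exact absurd hx.symm ((Sum.elim_injective.mp hj).2.2 a b)
  choose σ hσ using hrange
  have hσinj : Injective σ := fun a a' haa' =>
    (Sum.elim_injective.mp hj).1 (by rw [← hσ, ← hσ, haa'])
  exact ⟨Equiv.ofBijective σ (Finite.injective_iff_bijective.mp hσinj), funext fun a => (hσ a).symm⟩

theorem card_filter_injective_sumElim (h : N = k + m) {i : Fin k → Fin N} (hi : Injective i) :
    #{l : Fin m → Fin N | Injective (Sum.elim i l)} = m.factorial := by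
  have e : {l : Fin m → Fin N // Injective (Sum.elim i l)} ≃ (Fin m ↪ ↥(Set.range i)ᶜ) :=
    { toFun := fun l => ⟨fun b => ⟨l.1 b, fun ⟨a, ha⟩ => (Sum.elim_injective.mp l.2).2.2 a b ha⟩,
        fun b b' hbb' => (Sum.elim_injective.mp l.2).2.1 (congrArg Subtype.val hbb')⟩
      invFun := fun φ => ⟨fun b => φ b, Sum.elim_injective.mpr
        ⟨hi, Subtype.val_injective.comp φ.injective, fun a b hab => (φ b).2 ⟨a, hab⟩⟩⟩
      left_inv := fun _ => rfl
      right_inv := fun _ => rfl }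
  rw [← Fintype.card_subtype, Fintype.card_congr e, Fintype.card_embedding_eq,
    Fintype.card_compl_set, Set.card_range_of_injective hi]
  simp [h, Nat.descFactorial_self]

theorem sum_epsQ_mul_epsQ_inv_append (q : Fin N → Fin N → ℂ) (hq : ∀ a b, q a b * q b a = 1)
    (h : N = k + m) {i : Fin k → Fin N} (hi : Injective i) (σ : Perm (Fin k)) :
    ∑ l : Fin m → Fin N, epsQ q (fun t => Fin.append i l (Fin.cast h t))
      * epsQ (fun a b => (q a b)⁻¹) (fun t => Fin.append (i ∘ σ) l (Fin.cast h t))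
      = m.factorial * inversionProd q id ⇑σ⁻¹ i := by
  have hterm : ∀ l : Fin m → Fin N,
      epsQ q (fun t => Fin.append i l (Fin.cast h t))
        * epsQ (fun a b => (q a b)⁻¹) (fun t => Fin.append (i ∘ σ) l (Fin.cast h t))
      = if Injective (Sum.elim i l) then inversionProd q id ⇑σ⁻¹ i else 0 := by
    intro l
    split_ifs with hl
    · exact epsQ_mul_epsQ_inv_append q hq h hl σ
    · rw [epsQ_append_eq_zero q h hl, zero_mul]
  rw [sum_congr rfl fun l _ => hterm l, ← sum_filter, sum_const, card_filter_injective_sumElim h hi,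
    nsmul_eq_mul]

end Epsilon

end QAntisymmetrizer

open QAntisymmetrizer Finset

/-- epsilon contraction formula:
`Σ_{l_{k+1},...,l_N} ε_q^{i_1...i_k l_{k+1}...l_N} ε_{q^{-1}}_{j_1...j_k l_{k+1}...l_N}
 = (N−k)! · W^{i_1...i_k}_{j_1...j_k}`. -/
theorem eps_contraction {N : ℕ} (q : Fin N → Fin N → ℂ)
    (h1 : ∀ a, q a a = 1)
    (h2 : ∀ a b, q a b * q b a = 1) :
    ∀ (k : ℕ) (hk : k ≤ N) (i j : Fin k → Fin N),
      ∑ l : Fin (N - k) → Fin N,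
        epsQ q (fun t => Fin.append i l (Fin.cast (by omega) t)) *
          epsQ (fun a b => (q a b)⁻¹) (fun t => Fin.append j l (Fin.cast (by omega) t))
        = ((N - k).factorial : ℂ) * Wmat q k k i j := by
  intro k hk i j
  have h : N = k + (N - k) := by omega
  by_cases hi : Function.Injective i
  · by_cases hij : ∃ σ : Equiv.Perm (Fin k), j = i ∘ σ
    · obtain ⟨σ, rfl⟩ := hij
      rw [sum_epsQ_mul_epsQ_inv_append q h2 h hi, Wmat_apply_comp_of_injective q h2 hi]
    · rw [Wmat_apply_eq_zero_of_forall_ne q h2 fun σ hσ => hij ⟨σ, hσ⟩, mul_zero]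
      refine sum_eq_zero fun l _ => ?_
      by_cases hil : Function.Injective (Sum.elim i l)
      · rw [epsQ_append_eq_zero _ h fun hjl => hij (exists_perm_of_injective_sumElim h hil hjl),
          mul_zero]
      · rw [epsQ_append_eq_zero q h hil, zero_mul]
  · rw [Wmat_apply_eq_zero_of_not_injective q h1 h2 hi, mul_zero]
    exact sum_eq_zero fun l _ => by
      rw [epsQ_append_eq_zero q h fun hil => hi (Sum.elim_injective.mp hil).1, zero_mul]
end

section
/- Hermiticity of the q-antisymmetrizer with respect to the metric: g^{a_k b_k}⋯g^{a_1 b_1} W^{i_k...i_1}_{b_k...b_1} = W^{a_1...a_k}_{b_1...b_k} g^{b_1 i_1}⋯g^{b_k i_k} (summation over the b's), where g^{ab}=δ_{a,b'} and W is the q-antisymmetrizer on (ℂ^N)^{⊗k}. -/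
/-- The metric `g^{ab} = g_{ab} = δ_{a,b'}` with primed index `b' = Fin.rev b`. -/
def gMet {N : ℕ} (a b : Fin N) : ℂ := if b = Fin.rev a then 1 else 0

open Equiv Equiv.Perm Finset

section TwistFactor

variable {k : ℕ} {α R : Type*} [CommMonoid R] {q : α → α → R}

/-- `finPairsLT k` lists the pairs `⟨a, b⟩` with `b < a`, so the factors are indexed by the
inversions of `σ`. -/
def twistFactor (q : α → α → R) (f : Fin k → α) (σ : Perm (Fin k)) : R :=
  ∏ x ∈ finPairsLT k, if σ x.1 < σ x.2 then q (f (σ x.1)) (f (σ x.2)) else 1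

lemma prod_finPairsLT_signBijAux {M : Type*} [CommMonoid M] (u : Perm (Fin k))
    (F : (Σ _ : Fin k, Fin k) → M) :
    ∏ x ∈ finPairsLT k, F (signBijAux u x) = ∏ x ∈ finPairsLT k, F x :=
  prod_nbij (signBijAux u) signBijAux_mem signBijAux_injOn signBijAux_surj fun _ _ => rfl

lemma twistFactor_one (f : Fin k → α) : twistFactor q f 1 = 1 :=
  prod_eq_one fun _ hx => if_neg (mem_finPairsLT.1 hx).not_gt

lemma twistFactor_mul (h2 : ∀ a b, q a b * q b a = 1) (f : Fin k → α) (σ τ : Perm (Fin k)) :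
    twistFactor q f (σ * τ) = twistFactor q f σ * twistFactor q (f ∘ σ) τ := by
  rw [twistFactor, twistFactor, twistFactor, ← prod_finPairsLT_signBijAux τ
    (fun x => if σ x.1 < σ x.2 then q (f (σ x.1)) (f (σ x.2)) else 1), ← prod_mul_distrib]
  refine prod_congr rfl fun ⟨a, b⟩ hab => ?_
  rw [mem_finPairsLT] at hab
  simp only [signBijAux, mul_apply, Function.comp_apply]
  by_cases hτ : τ b < τ a
  · simp [hτ, hτ.not_gt]
  · have hτ' : τ a < τ b := (τ.injective.ne hab.ne').lt_of_le (not_lt.1 hτ)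
    rcases (σ.injective.ne (τ.injective.ne hab.ne')).lt_or_gt with hσ | hσ
    · simp [hτ, hτ', hσ, hσ.not_gt]
    · simp [hτ, hτ', hσ, hσ.not_gt, h2]

lemma twistFactor_swap_succ (f : Fin k → α) {t : ℕ} (ht : t + 1 < k) :
    twistFactor q f (swap ⟨t, by omega⟩ ⟨t + 1, ht⟩) = q (f ⟨t, by omega⟩) (f ⟨t + 1, ht⟩) := by
  rw [twistFactor, prod_eq_single ⟨⟨t + 1, ht⟩, ⟨t, by omega⟩⟩]
  · simp [Fin.lt_def]
  · rintro ⟨a, b⟩ hab hne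
    rw [mem_finPairsLT] at hab
    refine if_neg ?_
    simp only [swap_apply_def, Fin.ext_iff, Fin.lt_def, ne_eq, Sigma.mk.injEq, heq_eq_eq]
      at hab hne ⊢
    split_ifs <;> simp_all <;> omega
  · simp [mem_finPairsLT, Fin.lt_def]

end TwistFactor

section TwistPerm

variable {k : ℕ} {α R : Type*} [CommRing R] {q : α → α → R} [DecidableEq α]

def twistPerm (q : α → α → R) (σ : Perm (Fin k)) : Matrix (Fin k → α) (Fin k → α) R :=
  fun f g => if g = f ∘ σ then twistFactor q f σ else 0

lemma twistPerm_one : twistPerm q (1 : Perm (Fin k)) = 1 := by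
  ext f g
  simp [twistPerm, twistFactor_one, Matrix.one_apply, eq_comm]

variable [Fintype α]

lemma twistPerm_mul (h2 : ∀ a b, q a b * q b a = 1) (σ τ : Perm (Fin k)) :
    twistPerm q σ * twistPerm q τ = twistPerm q (σ * τ) := by
  ext f g
  rw [Matrix.mul_apply, sum_eq_single (f ∘ σ) (fun h _ hh => by simp [twistPerm, hh]) (by simp)]
  simp [twistPerm, twistFactor_mul h2, Function.comp_assoc]

lemma sign_smul_twistPerm_mul (h2 : ∀ a b, q a b * q b a = 1) (σ τ : Perm (Fin k)) :
    (sign σ • twistPerm q σ) * (sign τ • twistPerm q τ) = sign (σ * τ) • twistPerm q (σ * τ) := by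
  rw [smul_mul_smul_comm, twistPerm_mul h2, Perm.sign_mul]

end TwistPerm

lemma lamPos_eq_twistPerm {N : ℕ} (q : Fin N → Fin N → ℂ) {k t : ℕ} (ht : t + 1 < k) :
    lamPos q k t = twistPerm q (swap ⟨t, by omega⟩ ⟨t + 1, ht⟩) := by
  ext f g
  simp only [lamPos, ht, ↓reduceDIte]
  rw [twistPerm, twistFactor_swap_succ f ht]

lemma Fin.val_cycleIcc {k : ℕ} (i j x : Fin k) :
    (Fin.cycleIcc i j x : ℕ) =
      if x < i ∨ j < x then (x : ℕ) else if x = j then (i : ℕ) else (x : ℕ) + 1 := by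
  have := x.neZero
  rcases lt_or_ge x i with hxi | hix
  · simp [Fin.cycleIcc_of_lt hxi, hxi]
  rcases lt_or_ge j x with hjx | hxj
  · simp [Fin.cycleIcc_of_gt hjx, hjx]
  rw [if_neg (not_or.2 ⟨hix.not_gt, hxj.not_gt⟩), Fin.cycleIcc_of_le_of_le hix hxj]
  split_ifs with hx
  · rfl
  · exact Fin.val_add_one_of_lt' (by have := Fin.lt_def.1 (lt_of_le_of_ne hxj hx); omega)

lemma Fin.cycleIcc_mk_succ {k m : ℕ} {j : Fin k} (hj : (j : ℕ) ≤ m) (hm : m + 1 < k) :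
    Fin.cycleIcc j ⟨m + 1, hm⟩ = Fin.cycleIcc j ⟨m, by omega⟩ * swap ⟨m, by omega⟩ ⟨m + 1, hm⟩ := by
  ext x
  rw [Perm.mul_apply, Fin.val_cycleIcc, Fin.val_cycleIcc, swap_apply_def]
  simp only [Fin.lt_def, Fin.ext_iff]
  split_ifs <;> simp_all <;> omega

def permsFixingFrom (k m : ℕ) : Finset (Perm (Fin k)) := {σ | ∀ i : Fin k, m ≤ i → σ i = i}

lemma mem_permsFixingFrom {k m : ℕ} {σ : Perm (Fin k)} :
    σ ∈ permsFixingFrom k m ↔ ∀ i : Fin k, m ≤ i → σ i = i := by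
  simp [permsFixingFrom]

lemma permsFixingFrom_zero (k : ℕ) : permsFixingFrom k 0 = {1} := by
  ext σ
  simp [mem_permsFixingFrom, Perm.ext_iff]

lemma permsFixingFrom_self (k : ℕ) : permsFixingFrom k k = univ := by
  ext σ
  simp [mem_permsFixingFrom, fun i : Fin k => i.isLt.not_ge]

/-- Coset decomposition along `j = σ m`. -/
lemma sum_permsFixingFrom_succ {M : Type*} [AddCommMonoid M] {k m : ℕ} (hm : m < k)
    (F : Perm (Fin k) → M) :
    ∑ σ ∈ permsFixingFrom k (m + 1), F σ
      = ∑ j ∈ Iic (⟨m, hm⟩ : Fin k), ∑ τ ∈ permsFixingFrom k m, F (Fin.cycleIcc j ⟨m, hm⟩ * τ) := by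
  have := NeZero.of_pos (m.zero_le.trans_lt hm)
  set m' : Fin k := ⟨m, hm⟩
  rw [← sum_product']
  symm
  refine sum_nbij' (fun p => Fin.cycleIcc p.1 m' * p.2)
    (fun σ => (σ m', (Fin.cycleIcc (σ m') m')⁻¹ * σ)) ?_ ?_ ?_ ?_ fun _ _ => rfl
  · rintro ⟨j, τ⟩ hjτ
    simp only [mem_product, mem_Iic, mem_permsFixingFrom] at hjτ ⊢
    intro i hi
    rw [Perm.mul_apply, hjτ.2 i (by omega), Fin.cycleIcc_of_gt (show m' < i from hi)]
  · intro σ hσ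
    simp only [mem_product, mem_Iic, mem_permsFixingFrom] at hσ ⊢
    have hσm : σ m' ≤ m' := by
      by_contra! h
      exact h.ne' (σ.injective (hσ _ (Fin.lt_def.1 h)))
    refine ⟨hσm, fun i hi => ?_⟩
    rw [Perm.mul_apply, Perm.inv_eq_iff_eq]
    rcases hi.eq_or_lt with hi | hi
    · rw [show i = m' from Fin.ext hi.symm, Fin.cycleIcc_of_last hσm]
    · rw [hσ i hi, Fin.cycleIcc_of_gt (Fin.lt_def.2 hi)]
  · rintro ⟨j, τ⟩ hjτ
    simp only [mem_product, mem_Iic, mem_permsFixingFrom] at hjτ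
    have hj : (Fin.cycleIcc j m' * τ) m' = j := by
      rw [Perm.mul_apply, hjτ.2 m' le_rfl, Fin.cycleIcc_of_last hjτ.1]
    simp [hj]
  · intro σ _
    simp

section Antisymmetrizer

variable {N k : ℕ} {q : Fin N → Fin N → ℂ}

lemma Ical_eq_sum_cycleIcc (h2 : ∀ a b, q a b * q b a = 1) {m : ℕ} (hm : m < k) :
    Ical q k (m + 1) = ∑ j ∈ Iic (⟨m, hm⟩ : Fin k),
      sign (Fin.cycleIcc j ⟨m, hm⟩) • twistPerm q (Fin.cycleIcc j ⟨m, hm⟩) := by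
  have := NeZero.of_pos (m.zero_le.trans_lt hm)
  induction m with
  | zero => simp [Ical, twistPerm_one]
  | succ m ih =>
    have hIic : Iic (⟨m + 1, hm⟩ : Fin k) = (Iic ⟨m, by omega⟩).cons ⟨m + 1, hm⟩
        (by simp [Fin.le_def]) := by
      rw [Iic_eq_cons_Iio]
      congr 1
      ext j
      simp [Fin.le_def, Fin.lt_def]
    have hstep : ∀ j ∈ Iic (⟨m, by omega⟩ : Fin k),
        sign (Fin.cycleIcc j ⟨m, by omega⟩) • twistPerm q (Fin.cycleIcc j ⟨m, by omega⟩)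
            * lamPos q k m
          = -(sign (Fin.cycleIcc j ⟨m + 1, hm⟩) • twistPerm q (Fin.cycleIcc j ⟨m + 1, hm⟩)) := by
      intro j hj
      have hswap : lamPos q k m = -(sign (swap (⟨m, by omega⟩ : Fin k) ⟨m + 1, hm⟩)
          • twistPerm q (swap (⟨m, by omega⟩ : Fin k) ⟨m + 1, hm⟩)) := by
        rw [lamPos_eq_twistPerm q hm, sign_swap (by simp [Fin.ext_iff])]
        simp
      rw [hswap, mul_neg, sign_smul_twistPerm_mul h2,
        ← Fin.cycleIcc_mk_succ (Fin.le_def.1 (mem_Iic.1 hj)) hm]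
    rw [Ical, ih (by omega), hIic, sum_cons, Fin.cycleIcc_eq, sum_mul, sum_congr rfl hstep]
    simp [twistPerm_one, sub_eq_add_neg]

lemma Wmat_eq_sum_sign_smul_twistPerm (h2 : ∀ a b, q a b * q b a = 1) {m : ℕ} (hm : m ≤ k) :
    Wmat q k m = ∑ σ ∈ permsFixingFrom k m, sign σ • twistPerm q σ := by
  induction m with
  | zero => simp [Wmat, permsFixingFrom_zero, twistPerm_one]
  | succ m ih =>
    rw [Wmat, Ical_eq_sum_cycleIcc h2 hm, ih (by omega), sum_permsFixingFrom_succ hm, sum_mul]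
    simp_rw [mul_sum, sign_smul_twistPerm_mul h2]

end Antisymmetrizer

section Reversal

variable {N k : ℕ} {q : Fin N → Fin N → ℂ}

/-- The word `(i'_k, …, i'_1)` read off `(i_1, …, i_k)`, with `i' = Fin.rev i`. -/
def revPrime (f : Fin k → Fin N) : Fin k → Fin N := fun t => Fin.rev (f (Fin.rev t))

def revInvConj (σ : Perm (Fin k)) : Perm (Fin k) := Fin.revPerm * σ⁻¹ * Fin.revPerm

lemma twistFactor_revPrime (h4 : ∀ a b, q a b = q (Fin.rev a) (Fin.rev b))
    (f : Fin k → Fin N) (σ : Perm (Fin k)) :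
    twistFactor q (revPrime (f ∘ revInvConj σ)) σ
      = twistFactor q f (revInvConj σ) := by
  rw [twistFactor]
  conv_rhs => rw [twistFactor, ← prod_finPairsLT_signBijAux (Fin.revPerm * σ)]
  refine prod_congr rfl fun ⟨a, b⟩ hab => ?_
  rw [mem_finPairsLT] at hab
  have hrev : Fin.rev a < Fin.rev b := Fin.rev_lt_rev.2 hab
  by_cases hσ : σ a < σ b
  · simp [signBijAux, hσ, hrev, revPrime, revInvConj, ← h4]
  · simp [signBijAux, hσ, hrev.not_gt, revInvConj]

lemma revPrime_eq_comp_iff {f g : Fin k → Fin N} {σ : Perm (Fin k)} :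
    revPrime f = revPrime g ∘ σ ↔ g = f ∘ revInvConj σ := by
  simp only [funext_iff, revPrime, revInvConj, Function.comp_apply, Perm.mul_apply,
    Fin.revPerm_apply, Fin.rev_inj]
  constructor
  · intro h t
    simpa using (h (σ⁻¹ (Fin.rev t))).symm
  · intro h t
    simpa using (h (Fin.rev (σ t))).symm

lemma twistPerm_revPrime (h4 : ∀ a b, q a b = q (Fin.rev a) (Fin.rev b)) (σ : Perm (Fin k))
    (f g : Fin k → Fin N) :
    twistPerm q σ (revPrime g) (revPrime f) = twistPerm q (revInvConj σ) f g := by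
  rw [twistPerm, twistPerm]
  by_cases h : g = f ∘ revInvConj σ
  · rw [if_pos (revPrime_eq_comp_iff.2 h), if_pos h, h, twistFactor_revPrime h4]
  · rw [if_neg (mt revPrime_eq_comp_iff.1 h), if_neg h]

lemma sign_revInvConj (σ : Perm (Fin k)) : sign (revInvConj σ) = sign σ := by
  rw [revInvConj, Perm.sign_mul, Perm.sign_mul, sign_inv, mul_right_comm, Int.units_mul_self,
    one_mul]

lemma revInvConj_involutive : Function.Involutive (revInvConj (k := k)) := fun σ => by
  simp [revInvConj, mul_assoc]

lemma Wmat_revPrime (h2 : ∀ a b, q a b * q b a = 1)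
    (h4 : ∀ a b, q a b = q (Fin.rev a) (Fin.rev b)) (f g : Fin k → Fin N) :
    Wmat q k k (revPrime g) (revPrime f) = Wmat q k k f g := by
  simp only [Wmat_eq_sum_sign_smul_twistPerm h2 le_rfl, permsFixingFrom_self, Matrix.sum_apply,
    Matrix.smul_apply, twistPerm_revPrime h4]
  rw [← revInvConj_involutive.bijective.sum_comp (fun σ => sign σ • twistPerm q σ f g)]
  simp only [sign_revInvConj]

lemma gMet_comm (a b : Fin N) : gMet a b = gMet b a := by
  unfold gMet
  congr 1
  exact propext (eq_comm.trans Fin.rev_eq_iff)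

lemma prod_gMet (a b : Fin k → Fin N) :
    ∏ t, gMet (a t) (b t) = if b = Fin.rev ∘ a then 1 else 0 := by
  simp [gMet, prod_boole, funext_iff]

end Reversal

theorem Wmat_hermitian_general {N : ℕ} (q : Fin N → Fin N → ℂ)
    (h2 : ∀ a b, q a b * q b a = 1)
    (h4 : ∀ a b, q a b = q (Fin.rev a) (Fin.rev b)) :
    ∀ (k : ℕ) (a i : Fin k → Fin N),
      ∑ b : Fin k → Fin N,
        (∏ t, gMet (a t) (b t)) *
          Wmat q k k (fun t => i (Fin.rev t)) (fun t => b (Fin.rev t))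
      = ∑ b : Fin k → Fin N,
          Wmat q k k a b * ∏ t, gMet (b t) (i t) := by
  intro k a i
  have hcomm : ∀ b : Fin k → Fin N, ∏ t, gMet (b t) (i t) = ∏ t, gMet (i t) (b t) :=
    fun b => prod_congr rfl fun t _ => gMet_comm _ _
  have hi : (fun t => i (Fin.rev t)) = revPrime (Fin.rev ∘ i) := by
    funext t
    simp [revPrime]
  simp only [hcomm, prod_gMet, ite_mul, mul_ite, one_mul, mul_one, zero_mul, mul_zero,
    sum_ite_eq', mem_univ, if_true, hi]
  exact Wmat_revPrime h2 h4 a (Fin.rev ∘ i)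

/-- hermiticity of the q-antisymmetrizer with respect to the
metric: `g^{a_k b_k}⋯g^{a_1 b_1} W^{i_k...i_1}_{b_k...b_1}
 = W^{a_1...a_k}_{b_1...b_k} g^{b_1 i_1}⋯g^{b_k i_k}` (summation over the
`b`'s; reversed index order is realized by precomposition with `Fin.rev`). -/
theorem Wmat_hermitian {N : ℕ} (q : Fin N → Fin N → ℂ)
    (h1 : ∀ a, q a a = 1)
    (h2 : ∀ a b, q a b * q b a = 1)
    (h3 : ∀ a b, q a b * q a (Fin.rev b) = 1)
    (h4 : ∀ a b, q a b = q (Fin.rev a) (Fin.rev b)) :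
    ∀ (k : ℕ) (a i : Fin k → Fin N),
      ∑ b : Fin k → Fin N,
        (∏ t, gMet (a t) (b t)) *
          Wmat q k k (fun t => i (Fin.rev t)) (fun t => b (Fin.rev t))
      = ∑ b : Fin k → Fin N,
          Wmat q k k a b * ∏ t, gMet (b t) (i t) :=
  Wmat_hermitian_general q h2 h4
end

section
/- In the twisted Clifford algebra with relations γ^i γ^j + q(j,i) γ^j γ^i = 2g^{ij} on generators γ^1,...,γ^{2n+1}, the element e = ½(1 + Σ_{i,j} γ^i x_j g_{ij}) of Cliff ⊗ 𝕊_q^{2n} is a projector: e² = e, where x_j are the coordinate generators of the twisted sphere 𝕊_q^{2n} (satisfying x^a x^b = q(a,b) x^b x^a and Σ_a x^a x^{a'} = 1) and the Clifford generators q-commute with the coordinates compatibly (γ^i ⊗ 1 and 1 ⊗ x^j commute in the tensor product over ℂ with the appropriate identification γ^i x^j means γ^i ⊗ x^j). -/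
/-- in the twisted Clifford algebra with relations
`γ^i γ^j + q(j,i) γ^j γ^i = 2 g^{ij}` on generators `γ^1,...,γ^{2n+1}`
(`g^{ij} = δ_{i,j'}`, `i' = Fin.rev i`), tensored with the twisted sphere
`𝕊_q^{2n}` (coordinates `x^a` with `x^a x^b = q(a,b) x^b x^a` and
`Σ_a x^a x^{a'} = 1`, commuting with the Clifford generators), the element
`e = ½(1 + Σ_{i,j} γ^i x_j g_{ij}) = ½(1 + Σ_i γ^i x^{i'})` is a projector:
`e² = e`. -/
theorem instanton_projector {n : ℕ} (q : Fin (2 * n + 1) → Fin (2 * n + 1) → ℂ)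
    (h1 : ∀ a, q a a = 1)
    (h2 : ∀ a b, q a b * q b a = 1)
    (h3 : ∀ a b, q a b * q a (Fin.rev b) = 1)
    (h4 : ∀ a b, q a b = q (Fin.rev a) (Fin.rev b))
    (A : Type*) [Ring A] [Algebra ℂ A]
    (γ : Fin (2 * n + 1) → A) (x : Fin (2 * n + 1) → A)
    (hcliff : ∀ i j, γ i * γ j + q j i • (γ j * γ i)
      = (if j = Fin.rev i then (2 : ℂ) else 0) • (1 : A))
    (hx : ∀ a b, x a * x b = q a b • (x b * x a))
    (hsphere : ∑ a, x a * x (Fin.rev a) = 1)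
    (hcomm : ∀ i j, Commute (γ i) (x j)) :
    ((1 / 2 : ℂ) • (1 + ∑ i, γ i * x (Fin.rev i))) *
        ((1 / 2 : ℂ) • (1 + ∑ i, γ i * x (Fin.rev i)))
      = (1 / 2 : ℂ) • (1 + ∑ i, γ i * x (Fin.rev i)) := by
  set S := ∑ i, γ i * x (Fin.rev i) with hS
  have expand : S * S = ∑ i, ∑ j, γ i * γ j * (x (Fin.rev i) * x (Fin.rev j)) := by
    rw [hS, Finset.sum_mul_sum]
    refine Finset.sum_congr rfl fun i _ => Finset.sum_congr rfl fun j _ => ?_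
    have h := (hcomm j (Fin.rev i)).eq
    calc γ i * x (Fin.rev i) * (γ j * x (Fin.rev j))
        = γ i * (γ j * x (Fin.rev i)) * x (Fin.rev j) := by rw [h]; noncomm_ring
      _ = γ i * γ j * (x (Fin.rev i) * x (Fin.rev j)) := by noncomm_ring
  have swap : S * S = ∑ i, ∑ j, q j i • (γ j * γ i * (x (Fin.rev i) * x (Fin.rev j))) := by
    rw [expand, Finset.sum_comm]
    refine Finset.sum_congr rfl fun i _ => Finset.sum_congr rfl fun j _ => ?_
    have hxx : x (Fin.rev j) * x (Fin.rev i) = q j i • (x (Fin.rev i) * x (Fin.rev j)) := by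
      rw [hx, ← h4]
    rw [hxx, mul_smul_comm]
  have two_key : (2 : ℂ) • (S * S) = (2 : ℂ) • (1 : A) := by
    have : S * S + S * S = ∑ i, ∑ j,
        ((if j = Fin.rev i then (2 : ℂ) else 0) • (1 : A)) * (x (Fin.rev i) * x (Fin.rev j)) := by
      nth_rewrite 1 [expand]; nth_rewrite 1 [swap]
      rw [← Finset.sum_add_distrib]
      refine Finset.sum_congr rfl fun i _ => ?_
      rw [← Finset.sum_add_distrib]
      refine Finset.sum_congr rfl fun j _ => ?_
      rw [← hcliff, add_mul, smul_mul_assoc]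
    rw [two_smul, this]
    have : ∀ i : Fin (2 * n + 1), (∑ j,
        ((if j = Fin.rev i then (2 : ℂ) else 0) • (1 : A)) * (x (Fin.rev i) * x (Fin.rev j)))
        = (2 : ℂ) • (x (Fin.rev i) * x i) := by
      intro i
      rw [Finset.sum_eq_single (Fin.rev i)]
      · simp [Fin.rev_rev, smul_mul_assoc]
      · intro b _ hb; simp [hb]
      · simp
    simp_rw [this]
    rw [← Finset.smul_sum]
    congr 1
    rw [← hsphere]
    exact Fintype.sum_equiv (Function.Involutive.toPerm _ Fin.rev_involutive) _ _
      (fun i => by simp [Function.Involutive.toPerm, Fin.rev_rev])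
  have key : S * S = 1 :=
    smul_right_injective A (by norm_num : (2 : ℂ) ≠ 0) two_key
  have he : (1 + S) * (1 + S) = (2 : ℂ) • (1 + S) := by
    rw [mul_add, add_mul, add_mul, key]
    simp only [one_mul, mul_one, two_smul]
    abel
  rw [smul_mul_smul_comm, he, smul_smul]
  norm_num
end
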